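/- arXiv:2307.02444 — 8 statements merged into one kernel-verified Lean document; each statement's English description precedes it below -/
import Mathlib

section
/- Let P be a finite poset, let T ⊆ H_P be a line connected subgraph that is a tree, let P_T be the sub-poset generated by T, and let M be a kP-module whose gradient vanishes on T (i.e. there is a natural isomorphism β*(M_T) ≅ φ*(M_T)). Then there exists a family of k-linear isomorphisms α_{u,v} : M(u) → M(v), one for each ordered pair of elements u, v of P_T, such that α_{u,u} = id_{M(u)} for all u, α_{v,w} ∘ α_{u,v} = α_{u,w} for all u, v, w, and for every pair of covering relations u ⋖ w and s ⋖ t in P_T one has α_{w,t} ∘ M(u ≤ w) = M(s ≤ t) ∘ α_{u,s}. -/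
/-!
Since `T` is a tree, the edge isomorphisms `α_e` of the vanishing gradient can be composed along
the unique paths from a root `r`, giving `θ_u : M(r) ≃ M(u)` with `θ_v = α_(u,v) ∘ θ_u` on every
edge of `T`; the family `α_{u,v} = θ_v ∘ θ_u⁻¹` is then automatically coherent. Read through `θ`,
the structure map `M(u ≤ w)` of an edge becomes an endomorphism `θ_w⁻¹ ∘ M(u ≤ w) ∘ θ_u` of
`M(r)`. Naturality of `α` on two consecutive edges says exactly that these endomorphisms agree,
so by line connectedness they are all equal; as covering relations of `P_T` are edges of `T`,
this is the required compatibility.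
-/

/-- A `kP`-module: a functor from the poset `P` to finite dimensional
`k`-vector spaces, given by concrete data. -/
structure PModule (k : Type) (P : Type) [Field k] [Preorder P] where
  V : P → Type
  [acg : ∀ x, AddCommGroup (V x)]
  [mod : ∀ x, Module k (V x)]
  [fd : ∀ x, FiniteDimensional k (V x)]
  map : ∀ {x y : P}, x ≤ y → (V x →ₗ[k] V y)
  map_id : ∀ x : P, map (le_refl x) = LinearMap.id
  map_comp : ∀ {x y z : P} (h₁ : x ≤ y) (h₂ : y ≤ z), map (h₁.trans h₂) = (map h₂).comp (map h₁)

attribute [instance] PModule.acg PModule.mod PModule.fd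

/-- The order relation of the sub-poset `P_T` generated by the edge set `Te` on the
vertex set `Tv`: the reflexive-transitive closure of the edge relation of `T`. -/
def ptle {P : Type} [PartialOrder P] (Tv : Set P) (Te : Set (P × P)) (a b : ↥Tv) : Prop :=
  Relation.ReflTransGen (fun x y : ↥Tv => ((x : P), (y : P)) ∈ Te) a b

/-- The strict order relation of the sub-poset `P_T`. -/
def ptlt {P : Type} [PartialOrder P] (Tv : Set P) (Te : Set (P × P)) (a b : ↥Tv) : Prop :=
  ptle Tv Te a b ∧ ¬ ptle Tv Te b a

/-- The covering relation of the sub-poset `P_T`. -/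
def ptcov {P : Type} [PartialOrder P] (Tv : Set P) (Te : Set (P × P)) (a b : ↥Tv) : Prop :=
  ptlt Tv Te a b ∧ ∀ c : ↥Tv, ptlt Tv Te a c → ¬ ptlt Tv Te c b

/-- The order relation of the line poset of `P_T`, whose elements are the edges of `T`:
`e ≤ f` iff there is a chain of consecutive edges from `e` to `f`. -/
def tline {P : Type} [PartialOrder P] (Te : Set (P × P)) (e f : ↥Te) : Prop :=
  Relation.ReflTransGen (fun a b : ↥Te => (a : P × P).2 = (b : P × P).1) e f

namespace Relation.ReflTransGen

theorem eq_or_lt {α β : Type*} [Preorder β] {r : α → α → Prop} {f : α → β}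
    (hf : ∀ a b, r a b → f a < f b) {a b : α} (h : ReflTransGen r a b) : a = b ∨ f a < f b := by
  induction h with
  | refl => exact Or.inl rfl
  | tail _ hbc ih =>
    refine Or.inr ?_
    rcases ih with rfl | hlt
    · exact hf _ _ hbc
    · exact hlt.trans (hf _ _ hbc)

end Relation.ReflTransGen

namespace SimpleGraph

theorem Reachable.eq_of_forall_adj {V β : Type*} {G : SimpleGraph V} {f : V → β}
    (hf : ∀ a b, G.Adj a b → f a = f b) {u v : V} (h : G.Reachable u v) : f u = f v := by
  obtain ⟨p⟩ := h
  induction p with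
  | nil => rfl
  | cons hadj _ ih => exact (hf _ _ hadj).trans ih

variable {V R : Type*} [Semiring R] {N : V → Type*} [∀ v, AddCommMonoid (N v)]
  [∀ v, Module R (N v)]

open Classical in
noncomputable def fromRelEquiv (r : V → V → Prop) (F : ∀ a b, r a b → N a ≃ₗ[R] N b) (a b : V)
    (h : (fromRel r).Adj a b) : N a ≃ₗ[R] N b :=
  if hab : r a b then F a b hab else (F b a (h.2.resolve_left hab)).symm

theorem fromRelEquiv_of_rel {r : V → V → Prop} (F : ∀ a b, r a b → N a ≃ₗ[R] N b) {a b : V}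
    (h : (fromRel r).Adj a b) (hab : r a b) : fromRelEquiv r F a b h = F a b hab :=
  dif_pos hab

theorem fromRelEquiv_symm {r : V → V → Prop} (hr : ∀ a b, r a b → ¬ r b a)
    (F : ∀ a b, r a b → N a ≃ₗ[R] N b) {a b : V} (h : (fromRel r).Adj a b) :
    fromRelEquiv r F b a h.symm = (fromRelEquiv r F a b h).symm := by
  by_cases hab : r a b
  · rw [fromRelEquiv, fromRelEquiv, dif_neg (hr a b hab), dif_pos hab]
  · rw [fromRelEquiv, fromRelEquiv, dif_pos (h.2.resolve_left hab), dif_neg hab,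
      LinearEquiv.symm_symm]

variable {G : SimpleGraph V}

def Walk.transport (E : ∀ a b, G.Adj a b → N a ≃ₗ[R] N b) :
    ∀ {u v : V}, G.Walk u v → N u ≃ₗ[R] N v
  | _, _, .nil => LinearEquiv.refl R _
  | _, _, .cons h p => (E _ _ h).trans (p.transport E)

theorem Walk.transport_concat (E : ∀ a b, G.Adj a b → N a ≃ₗ[R] N b) {u v w : V}
    (p : G.Walk u v) (h : G.Adj v w) :
    (p.concat h).transport E = (p.transport E).trans (E v w h) := by
  induction p with
  | nil => exact (LinearEquiv.trans_refl _).trans (LinearEquiv.refl_trans _).symm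
  | cons h' p ih =>
    rw [Walk.concat_cons, transport, transport, ih, LinearEquiv.trans_assoc]

theorem IsTree.exists_trivialization (hG : G.IsTree) (r : V)
    (E : ∀ a b, G.Adj a b → N a ≃ₗ[R] N b)
    (hE : ∀ a b (h : G.Adj a b), E b a h.symm = (E a b h).symm) :
    ∃ θ : ∀ v, N r ≃ₗ[R] N v, ∀ a b (h : G.Adj a b), θ b = (θ a).trans (E a b h) := by
  choose p hp _ using fun v => hG.existsUnique_path r v
  refine ⟨fun v => (p v).transport E, fun a b h => ?_⟩
  dsimp only
  -- the paths from `r` to adjacent vertices differ by their last edge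
  by_cases ha : a ∈ (p b).support
  · rw [hG.isAcyclic.path_concat (hp a) (hp b) h ha, Walk.transport_concat]
  · have hb := hG.isAcyclic.mem_support_of_ne_mem_support_of_adj_of_isPath (hp a) (hp b) h ha
    rw [hG.isAcyclic.path_concat (hp b) (hp a) h.symm hb, Walk.transport_concat, hE a b h,
      LinearEquiv.trans_assoc, LinearEquiv.symm_trans_self, LinearEquiv.trans_refl]

end SimpleGraph

section LinearAlgebra

variable {R : Type*} [Semiring R] {N A B C D : Type*} [AddCommMonoid N] [AddCommMonoid A]
  [AddCommMonoid B] [AddCommMonoid C] [AddCommMonoid D] [Module R N] [Module R A] [Module R B]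
  [Module R C] [Module R D]

theorem conj_eq_conj_of_comm {θa : N ≃ₗ[R] A} {θb : N ≃ₗ[R] B} {θd : N ≃ₗ[R] D}
    {E₁ : A ≃ₗ[R] B} {E₂ : B ≃ₗ[R] D} (hb : θb = θa.trans E₁) (hd : θd = θb.trans E₂)
    {f : A →ₗ[R] B} {g : B →ₗ[R] D} (hfg : E₂.toLinearMap ∘ₗ f = g ∘ₗ E₁.toLinearMap) :
    θb.symm.toLinearMap ∘ₗ f ∘ₗ θa.toLinearMap = θd.symm.toLinearMap ∘ₗ g ∘ₗ θb.toLinearMap := by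
  subst hb hd
  ext x
  have := LinearMap.congr_fun hfg (θa x)
  simp only [LinearMap.comp_apply, LinearEquiv.coe_coe] at this
  simp [LinearEquiv.trans_apply, ← this]

theorem comp_eq_of_conj_eq {θa : N ≃ₗ[R] A} {θb : N ≃ₗ[R] B} {θc : N ≃ₗ[R] C}
    {θd : N ≃ₗ[R] D} {f : A →ₗ[R] B} {g : C →ₗ[R] D}
    (h : θb.symm.toLinearMap ∘ₗ f ∘ₗ θa.toLinearMap = θd.symm.toLinearMap ∘ₗ g ∘ₗ θc.toLinearMap) :
    (θb.symm.trans θd).toLinearMap ∘ₗ f = g ∘ₗ (θa.symm.trans θc).toLinearMap := by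
  ext x
  have := LinearMap.congr_fun h (θa.symm x)
  simp only [LinearMap.comp_apply, LinearEquiv.coe_coe, LinearEquiv.apply_symm_apply] at this
  simp [LinearEquiv.trans_apply, this]

end LinearAlgebra

section PosetModule

variable {k P : Type} [Field k] [PartialOrder P] {Tv : Set P} {Te : Set (P × P)}

theorem not_ptle_of_lt (hlt : ∀ e ∈ Te, e.1 < e.2) {a b : ↥Tv} (hab : (a : P) < b) :
    ¬ ptle Tv Te b a := fun h =>
  match Relation.ReflTransGen.eq_or_lt (fun _ _ h => hlt _ h) h with
  | .inl rfl => hab.false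
  | .inr hba => hba.asymm hab

theorem mem_of_ptcov (hlt : ∀ e ∈ Te, e.1 < e.2) {u w : ↥Tv} (h : ptcov Tv Te u w) :
    ((u : P), (w : P)) ∈ Te := by
  obtain ⟨⟨huw, hwu⟩, hmax⟩ := h
  rcases Relation.ReflTransGen.cases_head huw with rfl | ⟨c, huc, hcw⟩
  · exact absurd .refl hwu
  rcases Relation.ReflTransGen.eq_or_lt (fun _ _ h => hlt _ h) hcw with rfl | hcw'
  · exact huc
  · exact absurd ⟨hcw, not_ptle_of_lt hlt hcw'⟩
      (hmax c ⟨.single huc, not_ptle_of_lt hlt (hlt _ huc)⟩)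

/-- A natural isomorphism `β*(M_T) ≅ φ*(M_T)` on the line poset of `P_T`. -/
def IsBackFrontNatIso (M : PModule k P) (Te : Set (P × P))
    (α : ∀ e : ↥Te, M.V (e : P × P).1 ≃ₗ[k] M.V (e : P × P).2) : Prop :=
  ∀ (e f : ↥Te), tline Te e f →
    ∀ (h1 : (e : P × P).1 ≤ (f : P × P).1) (h2 : (e : P × P).2 ≤ (f : P × P).2),
      (α f).toLinearMap.comp (M.map h1) = (M.map h2).comp (α e).toLinearMap

variable (M : PModule k P) (hTe : ∀ e ∈ Te, e.1 ⋖ e.2 ∧ e.1 ∈ Tv ∧ e.2 ∈ Tv)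

def edgeSrc (g : ↥Te) : ↥Tv := ⟨(g : P × P).1, (hTe _ g.2).2.1⟩

def edgeTgt (g : ↥Te) : ↥Tv := ⟨(g : P × P).2, (hTe _ g.2).2.2⟩

theorem exists_edge_trivialization
    (htree : (SimpleGraph.fromRel (fun a b : ↥Tv => ((a : P), (b : P)) ∈ Te)).IsTree)
    (α : ∀ e : ↥Te, M.V (e : P × P).1 ≃ₗ[k] M.V (e : P × P).2) :
    ∃ (r : ↥Tv) (θ : ∀ u : ↥Tv, M.V (r : P) ≃ₗ[k] M.V (u : P)),
      ∀ g : ↥Te, θ (edgeTgt hTe g) = (θ (edgeSrc hTe g)).trans (α g) := by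
  have hlt : ∀ e ∈ Te, e.1 < e.2 := fun e he => (hTe e he).1.lt
  obtain ⟨r⟩ := htree.connected.nonempty
  obtain ⟨θ, hθ⟩ := htree.exists_trivialization r
    (N := fun u : ↥Tv => M.V (u : P)) (SimpleGraph.fromRelEquiv _ fun a b hab => α ⟨_, hab⟩)
    (fun a b h => SimpleGraph.fromRelEquiv_symm (fun a b hab hba => (hlt _ hab).asymm (hlt _ hba)) _ h)
  refine ⟨r, θ, fun g => ?_⟩
  have hadj : (SimpleGraph.fromRel fun a b : ↥Tv => ((a : P), (b : P)) ∈ Te).Adj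
      (edgeSrc hTe g) (edgeTgt hTe g) :=
    ⟨fun h => (hlt _ g.2).ne (congrArg Subtype.val h), Or.inl g.2⟩
  rw [hθ _ _ hadj, SimpleGraph.fromRelEquiv_of_rel _ hadj g.2]
  rfl

def trivializedMap {r : ↥Tv} (θ : ∀ u : ↥Tv, M.V (r : P) ≃ₗ[k] M.V (u : P)) (g : ↥Te) :
    Module.End k (M.V (r : P)) :=
  (θ (edgeTgt hTe g)).symm.toLinearMap ∘ₗ M.map (hTe _ g.2).1.le ∘ₗ (θ (edgeSrc hTe g)).toLinearMap

variable {M} {α : ∀ e : ↥Te, M.V (e : P × P).1 ≃ₗ[k] M.V (e : P × P).2} {r : ↥Tv}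
  {θ : ∀ u : ↥Tv, M.V (r : P) ≃ₗ[k] M.V (u : P)}

theorem trivializedMap_eq_of_consecutive (hα : IsBackFrontNatIso M Te α)
    (hθ : ∀ g : ↥Te, θ (edgeTgt hTe g) = (θ (edgeSrc hTe g)).trans (α g))
    {g h : ↥Te} (hgh : (g : P × P).2 = (h : P × P).1) :
    trivializedMap M hTe θ g = trivializedMap M hTe θ h := by
  obtain ⟨⟨a, b⟩, hg⟩ := g
  obtain ⟨⟨b', d⟩, hh⟩ := h
  obtain rfl : b = b' := hgh
  exact conj_eq_conj_of_comm (hθ _) (hθ _) (hα _ _ (.single rfl) _ _)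

theorem trivializedMap_eq
    (hlc : (SimpleGraph.fromRel (fun e f : ↥Te => (e : P × P).2 = (f : P × P).1)).Connected)
    (hα : IsBackFrontNatIso M Te α)
    (hθ : ∀ g : ↥Te, θ (edgeTgt hTe g) = (θ (edgeSrc hTe g)).trans (α g)) (g h : ↥Te) :
    trivializedMap M hTe θ g = trivializedMap M hTe θ h := by
  refine (hlc.preconnected g h).eq_of_forall_adj fun g h hadj => ?_
  rcases ((SimpleGraph.fromRel_adj _ _ _).1 hadj).2 with hgh | hhg
  · exact trivializedMap_eq_of_consecutive hTe hα hθ hgh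
  · exact (trivializedMap_eq_of_consecutive hTe hα hθ hhg).symm

end PosetModule

theorem statement0_general (k : Type) [Field k] (P : Type) [PartialOrder P]
    (Tv : Set P) (Te : Set (P × P))
    -- `T` is a subgraph of the Hasse diagram `H_P`, with vertex set `Tv` and edge set `Te`
    (hTe : ∀ e ∈ Te, (e.1 ⋖ e.2) ∧ e.1 ∈ Tv ∧ e.2 ∈ Tv)
    -- `T` is a tree: its underlying undirected graph is connected and acyclic
    (htree : (SimpleGraph.fromRel (fun a b : ↥Tv => ((a : P), (b : P)) ∈ Te)).IsTree)
    -- `T` is line connected: the line digraph of `T` is connected as an undirected graph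
    (hlc : (SimpleGraph.fromRel (fun e f : ↥Te => (e : P × P).2 = (f : P × P).1)).Connected)
    (M : PModule k P)
    -- the gradient of `M` vanishes on `T`: a natural isomorphism `β*(M_T) ≅ φ*(M_T)`
    (hgrad : ∃ α : ∀ e : ↥Te, (M.V (e : P × P).1 ≃ₗ[k] M.V (e : P × P).2),
      ∀ (e f : ↥Te), tline Te e f →
        ∀ (h1 : (e : P × P).1 ≤ (f : P × P).1) (h2 : (e : P × P).2 ≤ (f : P × P).2),
          (α f).toLinearMap.comp (M.map h1) = (M.map h2).comp (α e).toLinearMap) :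
    -- conclusion: a coherent family of isomorphisms
    ∃ α : ∀ u v : ↥Tv, (M.V (u : P) ≃ₗ[k] M.V (v : P)),
      (∀ u : ↥Tv, α u u = LinearEquiv.refl k (M.V (u : P))) ∧
      (∀ u v w : ↥Tv, (α u v).trans (α v w) = α u w) ∧
      (∀ u w s t : ↥Tv, ptcov Tv Te u w → ptcov Tv Te s t →
        ∀ (h1 : (u : P) ≤ (w : P)) (h2 : (s : P) ≤ (t : P)),
          (α w t).toLinearMap.comp (M.map h1) = (M.map h2).comp ((α u s).toLinearMap)) := by
  have hlt : ∀ e ∈ Te, e.1 < e.2 := fun e he => (hTe e he).1.lt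
  obtain ⟨α, hα⟩ := hgrad
  obtain ⟨r, θ, hθ⟩ := exists_edge_trivialization M hTe htree α
  refine ⟨fun u v => (θ u).symm.trans (θ v), fun u => (θ u).symm_trans_self, fun u v w => ?_,
    fun u w s t huw hst _ _ => comp_eq_of_conj_eq ?_⟩
  · rw [LinearEquiv.trans_assoc, ← LinearEquiv.trans_assoc (θ v), LinearEquiv.self_trans_symm,
      LinearEquiv.refl_trans]
  · exact trivializedMap_eq hTe hlc hα hθ ⟨_, mem_of_ptcov hlt huw⟩ ⟨_, mem_of_ptcov hlt hst⟩

theorem statement0 (k : Type) [Field k] (P : Type) [Fintype P] [PartialOrder P]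
    (Tv : Set P) (Te : Set (P × P))
    -- `T` is a subgraph of the Hasse diagram `H_P`, with vertex set `Tv` and edge set `Te`
    (hTe : ∀ e ∈ Te, (e.1 ⋖ e.2) ∧ e.1 ∈ Tv ∧ e.2 ∈ Tv)
    -- `T` is a tree: its underlying undirected graph is connected and acyclic
    (htree : (SimpleGraph.fromRel (fun a b : ↥Tv => ((a : P), (b : P)) ∈ Te)).IsTree)
    -- `T` is line connected: the line digraph of `T` is connected as an undirected graph
    (hlc : (SimpleGraph.fromRel (fun e f : ↥Te => (e : P × P).2 = (f : P × P).1)).Connected)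
    (M : PModule k P)
    -- the gradient of `M` vanishes on `T`: a natural isomorphism `β*(M_T) ≅ φ*(M_T)`
    (hgrad : ∃ α : ∀ e : ↥Te, (M.V (e : P × P).1 ≃ₗ[k] M.V (e : P × P).2),
      ∀ (e f : ↥Te), tline Te e f →
        ∀ (h1 : (e : P × P).1 ≤ (f : P × P).1) (h2 : (e : P × P).2 ≤ (f : P × P).2),
          (α f).toLinearMap.comp (M.map h1) = (M.map h2).comp (α e).toLinearMap) :
    -- conclusion: a coherent family of isomorphisms
    ∃ α : ∀ u v : ↥Tv, (M.V (u : P) ≃ₗ[k] M.V (v : P)),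
      (∀ u : ↥Tv, α u u = LinearEquiv.refl k (M.V (u : P))) ∧
      (∀ u v w : ↥Tv, (α u v).trans (α v w) = α u w) ∧
      (∀ u w s t : ↥Tv, ptcov Tv Te u w → ptcov Tv Te s t →
        ∀ (h1 : (u : P) ≤ (w : P)) (h2 : (s : P) ≤ (t : P)),
          (α w t).toLinearMap.comp (M.map h1) = (M.map h2).comp ((α u s).toLinearMap)) :=
  statement0_general k P Tv Te hTe htree hlc M hgrad
end

section
/- Let P be a finite poset, let T ⊆ H_P be a line connected subgraph that is a tree, let P_T be the sub-poset generated by T, and let M be a kP-module. Suppose there exists a family of k-linear isomorphisms α_{u,v} : M(u) → M(v) for all u, v ∈ P_T such that α_{u,u} = id_{M(u)}, α_{v,w} ∘ α_{u,v} = α_{u,w} for all u, v, w, and α_{w,t} ∘ M(u ≤ w) = M(s ≤ t) ∘ α_{u,s} for every pair of covering relations u ⋖ w and s ⋖ t in P_T. Then the gradient of M vanishes on T, i.e. there is a natural isomorphism β*(M_T) ≅ φ*(M_T) of functors on the line poset of P_T. -/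
section SubPoset

variable {P : Type} [PartialOrder P] {Tv : Set P} {Te : Set (P × P)}

theorem le_of_ptle (hTe : ∀ e ∈ Te, e.1 ≤ e.2) {a b : ↥Tv} (h : ptle Tv Te a b) :
    (a : P) ≤ (b : P) := by
  induction h with
  | refl => exact le_rfl
  | tail _ hstep ih => exact ih.trans (hTe _ hstep)

theorem lt_of_ptlt (hTe : ∀ e ∈ Te, e.1 ≤ e.2) {a b : ↥Tv} (h : ptlt Tv Te a b) :
    (a : P) < (b : P) := by
  refine (le_of_ptle hTe h.1).lt_of_ne fun hab => ?_
  obtain rfl : a = b := Subtype.ext hab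
  exact h.2 Relation.ReflTransGen.refl

theorem ptcov_of_mem (hTe : ∀ e ∈ Te, e.1 ⋖ e.2) {e : P × P} (he : e ∈ Te)
    (h1 : e.1 ∈ Tv) (h2 : e.2 ∈ Tv) : ptcov Tv Te ⟨e.1, h1⟩ ⟨e.2, h2⟩ := by
  have hTe_le : ∀ e ∈ Te, e.1 ≤ e.2 := fun e he => (hTe e he).le
  refine ⟨⟨Relation.ReflTransGen.single he, fun hback => ?_⟩, fun c hlt hgt => ?_⟩
  · exact (hTe e he).1.not_ge (le_of_ptle hTe_le hback)
  · exact (hTe e he).2 (lt_of_ptlt hTe_le hlt) (lt_of_ptlt hTe_le hgt)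

end SubPoset

section LinePoset

variable {P : Type} [PartialOrder P] {Te : Set (P × P)}

theorem le_and_le_of_tline (hTe : ∀ e ∈ Te, e.1 ≤ e.2) {e f : ↥Te} (h : tline Te e f) :
    (e : P × P).1 ≤ (f : P × P).1 ∧ (e : P × P).2 ≤ (f : P × P).2 := by
  induction h with
  | refl => exact ⟨le_rfl, le_rfl⟩
  | @tail b f _ hbf ih =>
    exact ⟨ih.1.trans ((hTe _ b.2).trans_eq hbf), (ih.2.trans_eq hbf).trans (hTe _ f.2)⟩

theorem tline_naturality_of_consecutive {k : Type} [Field k] (hTe : ∀ e ∈ Te, e.1 ≤ e.2)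
    (M : PModule k P) (η : ∀ e : ↥Te, M.V (e : P × P).1 →ₗ[k] M.V (e : P × P).2)
    (hstep : ∀ e f : ↥Te, (e : P × P).2 = (f : P × P).1 →
      ∀ (h1 : (e : P × P).1 ≤ (f : P × P).1) (h2 : (e : P × P).2 ≤ (f : P × P).2),
        (η f).comp (M.map h1) = (M.map h2).comp (η e))
    {e f : ↥Te} (hef : tline Te e f)
    (h1 : (e : P × P).1 ≤ (f : P × P).1) (h2 : (e : P × P).2 ≤ (f : P × P).2) :
    (η f).comp (M.map h1) = (M.map h2).comp (η e) := by
  induction hef with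
  | refl => rw [M.map_id, M.map_id, LinearMap.comp_id, LinearMap.id_comp]
  | @tail b f heb hbf ih =>
    obtain ⟨he1b1, he2b2⟩ := le_and_le_of_tline hTe heb
    have hb1f1 : (b : P × P).1 ≤ (f : P × P).1 := (hTe _ b.2).trans_eq hbf
    have hb2f2 : (b : P × P).2 ≤ (f : P × P).2 := hbf.trans_le (hTe _ f.2)
    calc (η f).comp (M.map h1)
        = ((η f).comp (M.map hb1f1)).comp (M.map he1b1) := by
          rw [LinearMap.comp_assoc, ← M.map_comp]
      _ = (M.map hb2f2).comp ((η b).comp (M.map he1b1)) := by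
          rw [hstep b f hbf, LinearMap.comp_assoc]
      _ = (M.map h2).comp (η e) := by
          rw [ih he1b1 he2b2, ← LinearMap.comp_assoc, ← M.map_comp]

end LinePoset

theorem statement2_general (k : Type) [Field k] (P : Type) [PartialOrder P]
    (Tv : Set P) (Te : Set (P × P))
    -- `T` is a subgraph of the Hasse diagram `H_P`, with vertex set `Tv` and edge set `Te`
    (hTe : ∀ e ∈ Te, (e.1 ⋖ e.2) ∧ e.1 ∈ Tv ∧ e.2 ∈ Tv)
    (M : PModule k P)
    -- a coherent family of isomorphisms, compatible with `M` on covering relations of `P_T`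
    (α : ∀ u v : ↥Tv, (M.V (u : P) ≃ₗ[k] M.V (v : P)))
    (hcomm : ∀ u w s t : ↥Tv, ptcov Tv Te u w → ptcov Tv Te s t →
      ∀ (h1 : (u : P) ≤ (w : P)) (h2 : (s : P) ≤ (t : P)),
        (α w t).toLinearMap.comp (M.map h1) = (M.map h2).comp ((α u s).toLinearMap)) :
    -- conclusion: the gradient of `M` vanishes on `T`,
    -- i.e. there is a natural isomorphism `β*(M_T) ≅ φ*(M_T)`
    ∃ η : ∀ e : ↥Te, (M.V (e : P × P).1 ≃ₗ[k] M.V (e : P × P).2),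
      ∀ (e f : ↥Te), tline Te e f →
        ∀ (h1 : (e : P × P).1 ≤ (f : P × P).1) (h2 : (e : P × P).2 ≤ (f : P × P).2),
          (η f).toLinearMap.comp (M.map h1) = (M.map h2).comp (η e).toLinearMap := by
  have hcov : ∀ e ∈ Te, e.1 ⋖ e.2 := fun e he => (hTe e he).1
  refine ⟨fun e => α ⟨_, (hTe _ e.2).2.1⟩ ⟨_, (hTe _ e.2).2.2⟩, fun e f hef =>
    tline_naturality_of_consecutive (fun e he => (hcov e he).le) M
      (fun e => (α ⟨_, (hTe _ e.2).2.1⟩ ⟨_, (hTe _ e.2).2.2⟩).toLinearMap) ?_ hef⟩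
  rintro ⟨⟨u, w⟩, hb⟩ ⟨⟨w', t⟩, hf⟩ (rfl : w = w') h1 h2
  exact hcomm _ _ _ _ (ptcov_of_mem hcov hb _ _) (ptcov_of_mem hcov hf _ _) h1 h2

theorem statement2 (k : Type) [Field k] (P : Type) [Fintype P] [PartialOrder P]
    (Tv : Set P) (Te : Set (P × P))
    -- `T` is a subgraph of the Hasse diagram `H_P`, with vertex set `Tv` and edge set `Te`
    (hTe : ∀ e ∈ Te, (e.1 ⋖ e.2) ∧ e.1 ∈ Tv ∧ e.2 ∈ Tv)
    -- `T` is a tree: its underlying undirected graph is connected and acyclic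
    (htree : (SimpleGraph.fromRel (fun a b : ↥Tv => ((a : P), (b : P)) ∈ Te)).IsTree)
    -- `T` is line connected: the line digraph of `T` is connected as an undirected graph
    (hlc : (SimpleGraph.fromRel (fun e f : ↥Te => (e : P × P).2 = (f : P × P).1)).Connected)
    (M : PModule k P)
    -- a coherent family of isomorphisms, compatible with `M` on covering relations of `P_T`
    (α : ∀ u v : ↥Tv, (M.V (u : P) ≃ₗ[k] M.V (v : P)))
    (hrefl : ∀ u : ↥Tv, α u u = LinearEquiv.refl k (M.V (u : P)))
    (htrans : ∀ u v w : ↥Tv, (α u v).trans (α v w) = α u w)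
    (hcomm : ∀ u w s t : ↥Tv, ptcov Tv Te u w → ptcov Tv Te s t →
      ∀ (h1 : (u : P) ≤ (w : P)) (h2 : (s : P) ≤ (t : P)),
        (α w t).toLinearMap.comp (M.map h1) = (M.map h2).comp ((α u s).toLinearMap)) :
    -- conclusion: the gradient of `M` vanishes on `T`,
    -- i.e. there is a natural isomorphism `β*(M_T) ≅ φ*(M_T)`
    ∃ η : ∀ e : ↥Te, (M.V (e : P × P).1 ≃ₗ[k] M.V (e : P × P).2),
      ∀ (e f : ↥Te), tline Te e f →
        ∀ (h1 : (e : P × P).1 ≤ (f : P × P).1) (h2 : (e : P × P).2 ≤ (f : P × P).2),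
          (η f).toLinearMap.comp (M.map h1) = (M.map h2).comp (η e).toLinearMap :=
  statement2_general k P Tv Te hTe M α hcomm
end

section
/- Let P be a finite poset and let M, N be kP-modules such that there is a natural isomorphism φ*M ⊕ β*N ≅ φ*N ⊕ β*M of functors on the line poset P̂ (direct sums taken objectwise); that is, the virtual module [M] − [N] has vanishing gradient. Then for every pair of elements (u₀,u₁) ≤ (v₀,v₁) of P̂ one has rank M(u₀ ≤ v₀) − rank N(u₀ ≤ v₀) = rank M(u₁ ≤ v₁) − rank N(u₁ ≤ v₁), where rank denotes the rank of the corresponding k-linear map. -/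
/-- An element of the line poset `P̂` of a poset `P`: a covering relation `src ⋖ tgt`. -/
structure Cov (P : Type) [PartialOrder P] : Type where
  src : P
  tgt : P
  cov : src ⋖ tgt

/-- The order relation of the line poset `P̂`: `e ≤ f` iff `e = f` or there is a chain of
consecutive covering relations from `e` to `f`. -/
def hatle {P : Type} [PartialOrder P] (e f : Cov P) : Prop :=
  Relation.ReflTransGen (fun a b : Cov P => a.tgt = b.src) e f

namespace Submodule

variable {R A B : Type*} [Semiring R] [AddCommMonoid A] [AddCommMonoid B]
  [Module R A] [Module R B]

def prodEquiv (p : Submodule R A) (q : Submodule R B) : p.prod q ≃ₗ[R] p × q where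
  toFun x := (⟨x.1.1, x.2.1⟩, ⟨x.1.2, x.2.2⟩)
  invFun y := ⟨(y.1.1, y.2.1), ⟨y.1.2, y.2.2⟩⟩
  map_add' _ _ := rfl
  map_smul' _ _ := rfl
  left_inv _ := rfl
  right_inv _ := rfl

theorem finrank_prod [StrongRankCondition R] (p : Submodule R A) (q : Submodule R B)
    [Module.Free R p] [Module.Free R q] [Module.Finite R p] [Module.Finite R q] :
    Module.finrank R (p.prod q) = Module.finrank R p + Module.finrank R q := by
  rw [(prodEquiv p q).finrank_eq, Module.finrank_prod]

end Submodule

namespace LinearMap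

theorem finrank_range_prodMap {K A B C D : Type*} [DivisionRing K]
    [AddCommGroup A] [Module K A] [FiniteDimensional K A] [AddCommGroup B] [Module K B]
    [AddCommGroup C] [Module K C] [FiniteDimensional K C] [AddCommGroup D] [Module K D]
    (f : A →ₗ[K] B) (g : C →ₗ[K] D) :
    Module.finrank K (range (f.prodMap g)) =
      Module.finrank K (range f) + Module.finrank K (range g) := by
  rw [range_prodMap, Submodule.finrank_prod]

theorem finrank_range_eq_of_comp_equiv_eq {R A A' B B' : Type*} [Ring R]
    [AddCommGroup A] [Module R A] [AddCommGroup A'] [Module R A']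
    [AddCommGroup B] [Module R B] [AddCommGroup B'] [Module R B']
    {f : A →ₗ[R] B} {g : A' →ₗ[R] B'} (eB : B ≃ₗ[R] B') (eA : A ≃ₗ[R] A')
    (h : eB.toLinearMap ∘ₗ f = g ∘ₗ eA.toLinearMap) :
    Module.finrank R (range f) = Module.finrank R (range g) := by
  rw [← eB.finrank_map_eq, ← range_comp, h, LinearEquiv.range_comp]

end LinearMap

theorem statement3_general (k : Type) [Field k] (P : Type) [PartialOrder P]
    (M N : PModule k P)
    -- the gradient of `[M] − [N]` vanishes:
    -- a natural isomorphism `φ*M ⊕ β*N ≅ φ*N ⊕ β*M` on the line poset `P̂`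
    (hgrad : ∃ η : ∀ e : Cov P, ((M.V e.tgt × N.V e.src) ≃ₗ[k] (N.V e.tgt × M.V e.src)),
      ∀ (e f : Cov P), hatle e f →
        ∀ (h0 : e.src ≤ f.src) (h1 : e.tgt ≤ f.tgt),
          (η f).toLinearMap.comp (LinearMap.prodMap (M.map h1) (N.map h0)) =
            (LinearMap.prodMap (N.map h1) (M.map h0)).comp ((η e).toLinearMap)) :
    -- conclusion: equality of rank differences along any relation of `P̂`
    ∀ (e f : Cov P), hatle e f →
      ∀ (h0 : e.src ≤ f.src) (h1 : e.tgt ≤ f.tgt),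
        (Module.finrank k (LinearMap.range (M.map h0)) : ℤ)
            - (Module.finrank k (LinearMap.range (N.map h0)) : ℤ)
          = (Module.finrank k (LinearMap.range (M.map h1)) : ℤ)
            - (Module.finrank k (LinearMap.range (N.map h1)) : ℤ) := by
  obtain ⟨η, hη⟩ := hgrad
  intro e f hef h0 h1
  have hrank := LinearMap.finrank_range_eq_of_comp_equiv_eq (η f) (η e) (hη e f hef h0 h1)
  rw [LinearMap.finrank_range_prodMap, LinearMap.finrank_range_prodMap] at hrank
  omega

theorem statement3 (k : Type) [Field k] (P : Type) [Fintype P] [PartialOrder P]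
    (M N : PModule k P)
    -- the gradient of `[M] − [N]` vanishes:
    -- a natural isomorphism `φ*M ⊕ β*N ≅ φ*N ⊕ β*M` on the line poset `P̂`
    (hgrad : ∃ η : ∀ e : Cov P, ((M.V e.tgt × N.V e.src) ≃ₗ[k] (N.V e.tgt × M.V e.src)),
      ∀ (e f : Cov P), hatle e f →
        ∀ (h0 : e.src ≤ f.src) (h1 : e.tgt ≤ f.tgt),
          (η f).toLinearMap.comp (LinearMap.prodMap (M.map h1) (N.map h0)) =
            (LinearMap.prodMap (N.map h1) (M.map h0)).comp ((η e).toLinearMap)) :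
    -- conclusion: equality of rank differences along any relation of `P̂`
    ∀ (e f : Cov P), hatle e f →
      ∀ (h0 : e.src ≤ f.src) (h1 : e.tgt ≤ f.tgt),
        (Module.finrank k (LinearMap.range (M.map h0)) : ℤ)
            - (Module.finrank k (LinearMap.range (N.map h0)) : ℤ)
          = (Module.finrank k (LinearMap.range (M.map h1)) : ℤ)
            - (Module.finrank k (LinearMap.range (N.map h1)) : ℤ) :=
  statement3_general k P M N hgrad
end

section
/- Let P be a finite poset, let T ⊆ H_P be a line connected subgraph that is a tree, let P_T be the sub-poset generated by T, and let M, N be kP-modules such that there is a natural isomorphism φ*(M_T) ⊕ β*(N_T) ≅ φ*(N_T) ⊕ β*(M_T) of functors on the line poset of P_T (i.e. the virtual module [M] − [N] has vanishing gradient on T). Then: (a) the integer dim_k M(x) − dim_k N(x) is the same for all elements x of P_T; and (b) the integer rank M(u ≤ v) − rank N(u ≤ v) is the same for all covering relations u ⋖ v of P_T. -/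
def Submodule.prodEquiv_s4 {R A B : Type*} [Ring R] [AddCommGroup A] [AddCommGroup B]
    [Module R A] [Module R B] (p : Submodule R A) (q : Submodule R B) :
    p.prod q ≃ₗ[R] p × q where
  toFun x := (⟨x.val.1, x.prop.1⟩, ⟨x.val.2, x.prop.2⟩)
  invFun x := ⟨(x.1.val, x.2.val), ⟨x.1.prop, x.2.prop⟩⟩
  map_add' _ _ := rfl
  map_smul' _ _ := rfl
  left_inv _ := rfl
  right_inv _ := rfl

section LinearAlgebra

variable {R A B C D : Type*} [Field R] [AddCommGroup A] [AddCommGroup B] [AddCommGroup C]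
  [AddCommGroup D] [Module R A] [Module R B] [Module R C] [Module R D]

theorem LinearMap.finrank_range_prodMap_s4 [FiniteDimensional R B] [FiniteDimensional R D]
    (f : A →ₗ[R] B) (g : C →ₗ[R] D) :
    Module.finrank R (range (f.prodMap g))
      = Module.finrank R (range f) + Module.finrank R (range g) := by
  rw [range_prodMap, (Submodule.prodEquiv_s4 _ _).finrank_eq, Module.finrank_prod]

theorem LinearMap.finrank_range_eq_of_comp_eq (e₁ : A ≃ₗ[R] C) (e₂ : B ≃ₗ[R] D)
    {φ : A →ₗ[R] B} {ψ : C →ₗ[R] D} (h : e₂.toLinearMap ∘ₗ φ = ψ ∘ₗ e₁.toLinearMap) :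
    Module.finrank R (range φ) = Module.finrank R (range ψ) := by
  rw [← LinearEquiv.finrank_map_eq e₂, ← range_comp, h,
    range_comp_of_range_eq_top _ (LinearEquiv.range e₁)]

theorem finrank_sub_eq_of_prod_equiv [FiniteDimensional R A] [FiniteDimensional R B]
    [FiniteDimensional R C] [FiniteDimensional R D] (η : (B × C) ≃ₗ[R] (D × A)) :
    (Module.finrank R A : ℤ) - Module.finrank R C
      = (Module.finrank R B : ℤ) - Module.finrank R D := by
  have := η.finrank_eq
  rw [Module.finrank_prod, Module.finrank_prod] at this
  omega

theorem finrank_range_sub_eq_of_prodMap_comp_eq {A' B' C' : Type*} [AddCommGroup A']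
    [AddCommGroup B'] [AddCommGroup C'] [Module R A'] [Module R B'] [Module R C']
    [FiniteDimensional R B] [FiniteDimensional R C] [FiniteDimensional R B']
    [FiniteDimensional R C'] (f : A →ₗ[R] B) (g : B →ₗ[R] C) (f' : A' →ₗ[R] B')
    (g' : B' →ₗ[R] C') (η₁ : (B × A') ≃ₗ[R] (B' × A)) (η₂ : (C × B') ≃ₗ[R] (C' × B))
    (h : η₂.toLinearMap ∘ₗ g.prodMap f' = g'.prodMap f ∘ₗ η₁.toLinearMap) :
    (Module.finrank R (LinearMap.range f) : ℤ) - Module.finrank R (LinearMap.range f')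
      = (Module.finrank R (LinearMap.range g) : ℤ) - Module.finrank R (LinearMap.range g') := by
  have := LinearMap.finrank_range_eq_of_comp_eq η₁ η₂ h
  rw [LinearMap.finrank_range_prodMap_s4, LinearMap.finrank_range_prodMap_s4] at this
  omega

end LinearAlgebra

theorem SimpleGraph.Preconnected.eq_of_fromRel {V α : Type*} {r : V → V → Prop}
    (hconn : (fromRel r).Preconnected) {f : V → α} (hf : ∀ a b, r a b → f a = f b) (a b : V) :
    f a = f b := by
  obtain ⟨w⟩ := hconn a b
  induction w with
  | nil => rfl
  | cons hadj _ ih =>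
    rcases (fromRel_adj _ _ _).mp hadj |>.2 with h | h
    · exact (hf _ _ h).trans ih
    · exact (hf _ _ h).symm.trans ih

section SubPoset

variable {P : Type} [PartialOrder P] {Tv : Set P} {Te : Set (P × P)} {a b : ↥Tv}

theorem ptle.le (hTe : ∀ e ∈ Te, e.1 ≤ e.2) (h : ptle Tv Te a b) : (a : P) ≤ b := by
  induction h with
  | refl => exact le_rfl
  | tail _ hedge ih => exact ih.trans (hTe _ hedge)

theorem ptcov.mem (hTe : ∀ e ∈ Te, e.1 < e.2) (h : ptcov Tv Te a b) :
    ((a : P), (b : P)) ∈ Te := by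
  have hTe_le : ∀ e ∈ Te, e.1 ≤ e.2 := fun e he => (hTe e he).le
  rcases Relation.ReflTransGen.cases_head h.1.1 with hab | ⟨c, hac, hcb⟩
  · exact (h.1.2 (hab ▸ .refl)).elim
  change ptle Tv Te c b at hcb
  obtain rfl | hcb_ne := eq_or_ne c b
  · exact hac
  have hac_lt : ptlt Tv Te a c :=
    ⟨.single hac, fun hca => (hca.le hTe_le).not_gt (hTe _ hac)⟩
  have hcb_lt : ptlt Tv Te c b :=
    ⟨hcb, fun hbc => hcb_ne (Subtype.ext ((hcb.le hTe_le).antisymm (hbc.le hTe_le)))⟩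
  exact absurd hcb_lt (h.2 c hac_lt)

end SubPoset

namespace PModule

variable {k P : Type} [Field k] [PartialOrder P]

noncomputable def rankDiff (M N : PModule k P) {a b : P} (h : a ≤ b) : ℤ :=
  (Module.finrank k (LinearMap.range (M.map h)) : ℤ) - Module.finrank k (LinearMap.range (N.map h))

theorem rankDiff_eq_of_natural (M N : PModule k P) {a b c : P} (hab : a ≤ b) (hbc : b ≤ c)
    (η₁ : (M.V b × N.V a) ≃ₗ[k] (N.V b × M.V a))
    (η₂ : (M.V c × N.V b) ≃ₗ[k] (N.V c × M.V b))
    (hnat : η₂.toLinearMap ∘ₗ (M.map hbc).prodMap (N.map hab)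
      = (N.map hbc).prodMap (M.map hab) ∘ₗ η₁.toLinearMap) :
    rankDiff M N hab = rankDiff M N hbc :=
  finrank_range_sub_eq_of_prodMap_comp_eq _ _ _ _ η₁ η₂ hnat

end PModule

theorem statement4_general (k : Type) [Field k] (P : Type) [PartialOrder P]
    (Tv : Set P) (Te : Set (P × P))
    -- `T` is a subgraph of the Hasse diagram `H_P`, with vertex set `Tv` and edge set `Te`
    (hTe : ∀ e ∈ Te, (e.1 ⋖ e.2) ∧ e.1 ∈ Tv ∧ e.2 ∈ Tv)
    -- `T` is a tree: its underlying undirected graph is connected and acyclic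
    (htree : (SimpleGraph.fromRel (fun a b : ↥Tv => ((a : P), (b : P)) ∈ Te)).IsTree)
    -- `T` is line connected: the line digraph of `T` is connected as an undirected graph
    (hlc : (SimpleGraph.fromRel (fun e f : ↥Te => (e : P × P).2 = (f : P × P).1)).Connected)
    (M N : PModule k P)
    -- `[M] − [N]` has vanishing gradient on `T`:
    -- a natural isomorphism `φ*(M_T) ⊕ β*(N_T) ≅ φ*(N_T) ⊕ β*(M_T)`
    (hgrad : ∃ η : ∀ e : ↥Te,
        ((M.V (e : P × P).2 × N.V (e : P × P).1) ≃ₗ[k] (N.V (e : P × P).2 × M.V (e : P × P).1)),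
      ∀ (e f : ↥Te), tline Te e f →
        ∀ (h0 : (e : P × P).1 ≤ (f : P × P).1) (h1 : (e : P × P).2 ≤ (f : P × P).2),
          (η f).toLinearMap.comp (LinearMap.prodMap (M.map h1) (N.map h0)) =
            (LinearMap.prodMap (N.map h1) (M.map h0)).comp ((η e).toLinearMap)) :
    -- (a) `dim M(x) − dim N(x)` is the same for all elements of `P_T`
    (∀ x y : ↥Tv,
      (Module.finrank k (M.V (x : P)) : ℤ) - (Module.finrank k (N.V (x : P)) : ℤ)
        = (Module.finrank k (M.V (y : P)) : ℤ) - (Module.finrank k (N.V (y : P)) : ℤ)) ∧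
    -- (b) `rk M(u≤v) − rk N(u≤v)` is the same for all covering relations of `P_T`
    (∀ u v s t : ↥Tv, ptcov Tv Te u v → ptcov Tv Te s t →
      ∀ (h : (u : P) ≤ (v : P)) (h' : (s : P) ≤ (t : P)),
        (Module.finrank k (LinearMap.range (M.map h)) : ℤ)
            - (Module.finrank k (LinearMap.range (N.map h)) : ℤ)
          = (Module.finrank k (LinearMap.range (M.map h')) : ℤ)
            - (Module.finrank k (LinearMap.range (N.map h')) : ℤ)) := by
  obtain ⟨η, hnat⟩ := hgrad
  have hlt : ∀ e ∈ Te, e.1 < e.2 := fun e he => (hTe e he).1.lt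
  refine ⟨htree.connected.preconnected.eq_of_fromRel fun x y hxy => ?_, ?_⟩
  · exact finrank_sub_eq_of_prod_equiv (η ⟨_, hxy⟩)
  · have hconst := hlc.preconnected.eq_of_fromRel
      (f := fun e : ↥Te => PModule.rankDiff M N (hlt e e.2).le)
      fun e f hef => by
        obtain ⟨⟨a, b⟩, he⟩ := e
        obtain ⟨⟨b', c⟩, hf⟩ := f
        obtain rfl : b = b' := hef
        exact PModule.rankDiff_eq_of_natural M N _ _ _ _ (hnat _ _ (.single rfl) _ _)
    intro u v s t huv hst _ _
    exact hconst ⟨_, huv.mem hlt⟩ ⟨_, hst.mem hlt⟩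

theorem statement4 (k : Type) [Field k] (P : Type) [Fintype P] [PartialOrder P]
    (Tv : Set P) (Te : Set (P × P))
    -- `T` is a subgraph of the Hasse diagram `H_P`, with vertex set `Tv` and edge set `Te`
    (hTe : ∀ e ∈ Te, (e.1 ⋖ e.2) ∧ e.1 ∈ Tv ∧ e.2 ∈ Tv)
    -- `T` is a tree: its underlying undirected graph is connected and acyclic
    (htree : (SimpleGraph.fromRel (fun a b : ↥Tv => ((a : P), (b : P)) ∈ Te)).IsTree)
    -- `T` is line connected: the line digraph of `T` is connected as an undirected graph
    (hlc : (SimpleGraph.fromRel (fun e f : ↥Te => (e : P × P).2 = (f : P × P).1)).Connected)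
    (M N : PModule k P)
    -- `[M] − [N]` has vanishing gradient on `T`:
    -- a natural isomorphism `φ*(M_T) ⊕ β*(N_T) ≅ φ*(N_T) ⊕ β*(M_T)`
    (hgrad : ∃ η : ∀ e : ↥Te,
        ((M.V (e : P × P).2 × N.V (e : P × P).1) ≃ₗ[k] (N.V (e : P × P).2 × M.V (e : P × P).1)),
      ∀ (e f : ↥Te), tline Te e f →
        ∀ (h0 : (e : P × P).1 ≤ (f : P × P).1) (h1 : (e : P × P).2 ≤ (f : P × P).2),
          (η f).toLinearMap.comp (LinearMap.prodMap (M.map h1) (N.map h0)) =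
            (LinearMap.prodMap (N.map h1) (M.map h0)).comp ((η e).toLinearMap)) :
    -- (a) `dim M(x) − dim N(x)` is the same for all elements of `P_T`
    (∀ x y : ↥Tv,
      (Module.finrank k (M.V (x : P)) : ℤ) - (Module.finrank k (N.V (x : P)) : ℤ)
        = (Module.finrank k (M.V (y : P)) : ℤ) - (Module.finrank k (N.V (y : P)) : ℤ)) ∧
    -- (b) `rk M(u≤v) − rk N(u≤v)` is the same for all covering relations of `P_T`
    (∀ u v s t : ↥Tv, ptcov Tv Te u v → ptcov Tv Te s t →
      ∀ (h : (u : P) ≤ (v : P)) (h' : (s : P) ≤ (t : P)),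
        (Module.finrank k (LinearMap.range (M.map h)) : ℤ)
            - (Module.finrank k (LinearMap.range (N.map h)) : ℤ)
          = (Module.finrank k (LinearMap.range (M.map h')) : ℤ)
            - (Module.finrank k (LinearMap.range (N.map h')) : ℤ)) :=
  statement4_general k P Tv Te hTe htree hlc M N hgrad
end

section
/- Let P be a finite poset whose Hasse diagram H_P is a rooted tree: the underlying undirected graph of H_P is connected and contains no cycles, and P has a unique minimal element. Let U, V be kP̂-modules such that there is a natural isomorphism L_φ(U) ⊕ L_β(V) ≅ L_φ(V) ⊕ L_β(U) of kP-modules (i.e. the left divergence of the virtual module [U] − [V] vanishes). Then dim_k U(x,y) = dim_k V(x,y) for every covering relation (x,y) ∈ P̂. -/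
/-!
STATEMENT 8: For a finite poset P whose Hasse diagram is a rooted tree, if the left
divergence of the virtual kP̂-module [U] − [V] vanishes, i.e.
L_φ(U) ⊕ L_β(V) ≅ L_φ(V) ⊕ L_β(U), then dim U(x,y) = dim V(x,y) for every (x,y) ∈ P̂.
-/

open CategoryTheory

/-- The order on the line poset `P̂`: `e ≤ f` iff `e = f` or there is a chain of
consecutive covering relations from `e` to `f`. -/
instance (P : Type) [PartialOrder P] : Preorder (Cov P) where
  le e f := Relation.ReflTransGen (fun a b : Cov P => a.tgt = b.src) e f
  le_refl _ := Relation.ReflTransGen.refl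
  le_trans _ _ _ h h' := Relation.ReflTransGen.trans h h'

theorem Cov.src_mono {P : Type} [PartialOrder P] : Monotone (fun e : Cov P => e.src) := by
  intro a b h
  have h' : Relation.ReflTransGen (fun a b : Cov P => a.tgt = b.src) a b := h
  clear h
  induction h' with
  | refl => exact le_rfl
  | @tail b c _ hbc ih => exact le_trans ih (le_trans b.cov.le (le_of_eq hbc))

theorem Cov.tgt_mono {P : Type} [PartialOrder P] : Monotone (fun e : Cov P => e.tgt) := by
  intro a b h
  have h' : Relation.ReflTransGen (fun a b : Cov P => a.tgt = b.src) a b := h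
  clear h
  induction h' with
  | refl => exact le_rfl
  | @tail b c _ hbc ih => exact le_trans ih (le_trans (le_of_eq hbc) c.cov.le)

/-- The back map `β : P̂ → P`, `(u,v) ↦ u`, as a functor. -/
def covBack (P : Type) [PartialOrder P] : Cov P ⥤ P := Monotone.functor Cov.src_mono

/-- The front map `φ : P̂ → P`, `(u,v) ↦ v`, as a functor. -/
def covFront (P : Type) [PartialOrder P] : Cov P ⥤ P := Monotone.functor Cov.tgt_mono

/-- Objectwise direct sum of two functors into `FGModuleCat k`. -/
noncomputable def dsum {k : Type} [Field k] {C : Type} [Category C]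
    (F G : C ⥤ FGModuleCat k) : C ⥤ FGModuleCat k where
  obj x := FGModuleCat.of k (F.obj x × G.obj x)
  map f := FGModuleCat.ofHom (LinearMap.prodMap (F.map f).hom.hom (G.map f).hom.hom)
  map_id x := by
    apply FGModuleCat.hom_ext
    rw [CategoryTheory.Functor.map_id, CategoryTheory.Functor.map_id]
    rfl
  map_comp f g := by
    apply FGModuleCat.hom_ext
    rw [CategoryTheory.Functor.map_comp, CategoryTheory.Functor.map_comp]
    rfl

/-!
Every non-minimal element of `P` has a unique lower cover, since two of them would close a cycle
through the root of the Hasse tree. So `P` carries a predecessor map `pred`, and `β = pred ∘ φ`.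
Fix `p : P` and let `W_p` be the `kP`-module that is `k` on `{q | q ≤ p, q not minimal}`, and
`I_n = W_p ∘ predⁿ`. For a `kP̂`-module `X` put `f_X(n) = dim Hom(X, φ^* I_n)`. By the universal
property of left Kan extensions, `dim Hom(L_φ X, I_n) = f_X(n)` and
`dim Hom(L_β X, I_n) = dim Hom(X, φ^* I_{n+1}) = f_X(n+1)`, so applying `dim Hom(-, I_n)` to the
isomorphism gives `f_U(n) + f_V(n+1) = f_V(n) + f_U(n+1)`: the difference `f_U(n) - f_V(n)` does
not depend on `n`. It vanishes for large `n`, where `I_n = 0`. For `p = y` and `n = 0`,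
`φ^* I_0` is the dual of the module represented by `(x,y)`, because `f ≤ (x,y)` in `P̂` iff the top
of `f` lies below `y`; hence `f_X(0) = dim X(x,y)`.
-/

universe u v v' w w'

abbrev hasseGraph (P : Type*) [PartialOrder P] : SimpleGraph P :=
  SimpleGraph.fromRel fun a b : P => a ⋖ b

lemma hasseGraph_adj_of_covBy {P : Type*} [PartialOrder P] {a b : P} (h : a ⋖ b) :
    (hasseGraph P).Adj b a :=
  (SimpleGraph.fromRel_adj _ _ _).2 ⟨h.lt.ne', Or.inr h⟩

section LowerCovers

variable {P : Type*} [PartialOrder P] [Finite P]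

lemma exists_covBy_of_not_isMin {y : P} (hy : ¬IsMin y) : ∃ x, x ⋖ y := by
  obtain ⟨x, hx⟩ := not_isMin_iff.1 hy
  obtain ⟨c, -, hc⟩ := exists_le_covBy_of_lt hx
  exact ⟨c, hc⟩

open Classical in
@[reducible] noncomputable def PredOrder.ofCovByUnique
    (h : ∀ ⦃a b c : P⦄, a ⋖ c → b ⋖ c → a = b) : PredOrder P where
  pred y := if hy : IsMin y then y else (exists_covBy_of_not_isMin hy).choose
  pred_le y := by
    split_ifs with hy
    · exact le_rfl
    · exact (exists_covBy_of_not_isMin hy).choose_spec.le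
  min_of_le_pred {y} hle := by
    split_ifs at hle with hy
    · exact hy
    · exact absurd hle (exists_covBy_of_not_isMin hy).choose_spec.lt.not_ge
  le_pred_of_lt {a b} hab := by
    have hb : ¬IsMin b := not_isMin_of_lt hab
    obtain ⟨c, hac, hcb⟩ := exists_le_covBy_of_lt hab
    rw [dif_neg hb, h (exists_covBy_of_not_isMin hb).choose_spec hcb]
    exact hac

lemma isBot_of_forall_isMin_eq {r : P} (hu : ∀ m : P, IsMin m → m = r) : IsBot r := fun y => by
  obtain ⟨m, hmy, hm⟩ := exists_minimal_le_of_wellFoundedLT (fun _ => True) y trivial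
  exact hu m (minimal_true.1 hm) ▸ hmy

lemma exists_hasseGraph_walk_to_bot {r : P} (hr : IsBot r) (y : P) :
    ∃ w : (hasseGraph P).Walk y r, ∀ z ∈ w.support, z ≤ y := by
  induction y using WellFoundedLT.induction with
  | ind y ih =>
    rcases (hr y).eq_or_lt with rfl | hry
    · exact ⟨.nil, by simp⟩
    obtain ⟨c, -, hcy⟩ := exists_le_covBy_of_lt hry
    obtain ⟨w, hw⟩ := ih c hcy.lt
    have hadj := hasseGraph_adj_of_covBy hcy
    refine ⟨.cons hadj w, fun z hz => ?_⟩
    rcases List.mem_cons.1 (SimpleGraph.Walk.support_cons hadj w ▸ hz) with rfl | hz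
    · exact le_rfl
    · exact (hw z hz).trans hcy.le

theorem eq_of_covBy_of_hasseGraph_isTree (htree : (hasseGraph P).IsTree)
    (hroot : ∃! m : P, IsMin m) ⦃a b c : P⦄ (ha : a ⋖ c) (hb : b ⋖ c) : a = b := by
  classical
  obtain ⟨r, -, hu⟩ := hroot
  have path_through (x : P) (hx : x ⋖ c) : ∃ p : (hasseGraph P).Path c r, p.1.getVert 1 = x := by
    obtain ⟨w, hw⟩ := exists_hasseGraph_walk_to_bot (isBot_of_forall_isMin_eq hu) x
    have hc : c ∉ w.bypass.support := fun hc =>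
      (hw c (w.support_bypass_subset_support hc)).not_gt hx.lt
    exact ⟨⟨.cons (hasseGraph_adj_of_covBy hx) w.bypass, w.bypass_isPath.cons hc⟩, by simp⟩
  obtain ⟨p, rfl⟩ := path_through a ha
  obtain ⟨q, rfl⟩ := path_through b hb
  rw [(htree.isAcyclic.subsingleton_path c r).elim p q]

lemma exists_forall_isMin_pred_iterate [PredOrder P] : ∃ N, ∀ y : P, IsMin (Order.pred^[N] y) := by
  have (y : P) : ∃ n, IsMin (Order.pred^[n] y) := by
    obtain ⟨m, hmy, hm⟩ := exists_minimal_le_of_wellFoundedLT (fun _ => True) y trivial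
    obtain ⟨n, hn⟩ := exists_pred_iterate_of_le hmy
    exact ⟨n, hn ▸ minimal_true.1 hm⟩
  choose n hn using this
  obtain ⟨N, hN⟩ := (Set.finite_range n).bddAbove
  refine ⟨N, fun y => ?_⟩
  obtain ⟨d, hd⟩ := Nat.exists_eq_add_of_le (hN ⟨y, rfl⟩)
  rw [hd, add_comm, Function.iterate_add_apply, Function.iterate_fixed (hn y).pred_eq]
  exact hn y

end LowerCovers

namespace Cov

variable {P : Type} [PartialOrder P]

lemma ext {e f : Cov P} (hs : e.src = f.src) (ht : e.tgt = f.tgt) : e = f := by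
  cases e; cases f; simp_all

variable [PredOrder P]

lemma src_eq_pred_tgt (e : Cov P) : e.src = Order.pred e.tgt := e.cov.pred_eq.symm

lemma ext_of_tgt_eq {e f : Cov P} (h : e.tgt = f.tgt) : e = f :=
  ext (by rw [src_eq_pred_tgt, src_eq_pred_tgt, h]) h

lemma le_of_tgt_le [WellFoundedLT P] {e f : Cov P} (h : f.tgt ≤ e.tgt) : f ≤ e := by
  induction hte : e.tgt using WellFoundedLT.induction generalizing e with
  | ind t ih =>
    rcases (hte ▸ h).eq_or_lt with heq | hlt
    · exact (ext_of_tgt_eq (heq.trans hte.symm)).le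
    have hfe : f.tgt ≤ e.src := e.src_eq_pred_tgt ▸ Order.le_pred_of_lt (hte ▸ hlt)
    have hsrc : ¬IsMin e.src := fun hmin => (hmin.mono hfe).not_lt f.cov.lt
    let e' : Cov P := ⟨Order.pred e.src, e.src, Order.pred_covBy_of_not_isMin hsrc⟩
    have hfe' : f ≤ e' := ih e.src (hte ▸ e.cov.lt) hfe rfl
    exact hfe'.trans (Relation.ReflTransGen.single rfl)

end Cov

lemma covBack_eq_covFront_comp_pred (P : Type) [PartialOrder P] [PredOrder P] :
    covBack P = covFront P ⋙ Order.pred_mono.functor :=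
  CategoryTheory.Functor.ext (fun e : Cov P => e.src_eq_pred_tgt) fun _ _ _ =>
    Subsingleton.elim _ _

section NatTrans

variable (k : Type u) [CommRing k] {C : Type*} [Category C]

/-- Natural transformations `F ⟶ G` as a subspace of `∀ x, F.obj x →ₗ[k] G.obj x`; unlike the
hom-module `F ⟶ G`, this allows `F` and `G` to take values in different universes. -/
def natTransSubmodule (F : C ⥤ FGModuleCat.{v} k) (G : C ⥤ FGModuleCat.{w} k) :
    Submodule k (∀ x, F.obj x →ₗ[k] G.obj x) where
  carrier := {η | ∀ ⦃x y : C⦄ (h : x ⟶ y), (G.map h).hom.hom ∘ₗ η x = η y ∘ₗ (F.map h).hom.hom}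
  add_mem' hη hη' x y h := by
    simp only [Pi.add_apply, LinearMap.comp_add, LinearMap.add_comp, hη h, hη' h]
  zero_mem' x y h := by simp only [Pi.zero_apply, LinearMap.comp_zero, LinearMap.zero_comp]
  smul_mem' c η hη x y h := by
    simp only [Pi.smul_apply, LinearMap.comp_smul, LinearMap.smul_comp, hη h]

namespace natTransSubmodule

variable {k} {F : C ⥤ FGModuleCat.{v} k} {G : C ⥤ FGModuleCat.{w} k}

lemma naturality (η : natTransSubmodule k F G) {x y : C} (h : x ⟶ y) (v : F.obj x) :
    (G.map h).hom.hom (η.1 x v) = η.1 y ((F.map h).hom.hom v) :=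
  LinearMap.congr_fun (η.2 h) v

lemma comp_mem {H : C ⥤ FGModuleCat.{w'} k} {η : ∀ x, G.obj x →ₗ[k] H.obj x}
    {θ : ∀ x, F.obj x →ₗ[k] G.obj x} (hη : η ∈ natTransSubmodule k G H)
    (hθ : θ ∈ natTransSubmodule k F G) :
    (fun x => η x ∘ₗ θ x) ∈ natTransSubmodule k F H := fun x y h => by
  rw [← LinearMap.comp_assoc, hη h, LinearMap.comp_assoc, hθ h, LinearMap.comp_assoc]

lemma symm_mem {a : ∀ x, F.obj x ≃ₗ[k] G.obj x}
    (ha : (fun x => (a x).toLinearMap) ∈ natTransSubmodule k F G) :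
    (fun x => (a x).symm.toLinearMap) ∈ natTransSubmodule k G F := fun x y h => by
  ext v
  apply (a y).injective
  simpa using (LinearMap.congr_fun (ha h) ((a x).symm v)).symm

variable {F' : C ⥤ FGModuleCat.{v'} k} {G' : C ⥤ FGModuleCat.{w'} k}

def congr (a : ∀ x, F.obj x ≃ₗ[k] F'.obj x)
    (ha : (fun x => (a x).toLinearMap) ∈ natTransSubmodule k F F')
    (b : ∀ x, G.obj x ≃ₗ[k] G'.obj x)
    (hb : (fun x => (b x).toLinearMap) ∈ natTransSubmodule k G G') :
    natTransSubmodule k F G ≃ₗ[k] natTransSubmodule k F' G' where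
  toFun η := ⟨fun x => (b x).toLinearMap ∘ₗ η.1 x ∘ₗ (a x).symm.toLinearMap,
    comp_mem hb (comp_mem η.2 (symm_mem ha))⟩
  invFun η := ⟨fun x => (b x).symm.toLinearMap ∘ₗ η.1 x ∘ₗ (a x).toLinearMap,
    comp_mem (symm_mem hb) (comp_mem η.2 ha)⟩
  map_add' η η' := by ext x v; simp
  map_smul' c η := by ext x v; simp
  left_inv η := by ext x v; simp
  right_inv η := by ext x v; simp

lemma isoToLinearEquiv_mem {X Y : C ⥤ FGModuleCat.{v} k} (θ : X ≅ Y) :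
    (fun x => (FGModuleCat.isoToLinearEquiv (θ.app x)).toLinearMap) ∈ natTransSubmodule k X Y :=
  fun _ _ h => congrArg (fun f => f.hom.hom) (θ.hom.naturality h).symm

lemma subsingleton (hG : ∀ x, Subsingleton (G.obj x)) :
    Subsingleton (natTransSubmodule k F G) :=
  ⟨fun η η' => by ext x v; exact (hG x).elim _ _⟩

def equivHom (X Y : C ⥤ FGModuleCat.{v} k) : natTransSubmodule k X Y ≃ (X ⟶ Y) where
  toFun η := { app x := FGModuleCat.ofHom (η.1 x)
               naturality _ _ h := FGModuleCat.hom_ext (η.2 h).symm }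
  invFun τ := ⟨fun x => (τ.app x).hom.hom,
    fun _ _ h => congrArg (fun f => f.hom.hom) (τ.naturality h).symm⟩
  left_inv _ := rfl
  right_inv _ := rfl

noncomputable def lanEquiv {D : Type*} [Category D] (L : C ⥤ D) {X : C ⥤ FGModuleCat.{v} k}
    (X' : D ⥤ FGModuleCat.{v} k) (α : X ⟶ L ⋙ X') [X'.IsLeftKanExtension α]
    (Y : D ⥤ FGModuleCat.{v} k) :
    natTransSubmodule k X' Y ≃ₗ[k] natTransSubmodule k X (L ⋙ Y) where
  __ := ((equivHom X' Y).trans (X'.homEquivOfIsLeftKanExtension α Y)).trans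
    (equivHom X (L ⋙ Y)).symm
  map_add' _ _ := rfl
  map_smul' _ _ := rfl

end natTransSubmodule

end NatTrans

namespace natTransSubmodule

variable {k : Type} [Field k] {C : Type} [Category C]

noncomputable def dsumEquiv (A : C ⥤ FGModuleCat.{v} k) (B : C ⥤ FGModuleCat.{v'} k)
    (I : C ⥤ FGModuleCat.{w} k) :
    natTransSubmodule k (dsum A B) I ≃ₗ[k] natTransSubmodule k A I × natTransSubmodule k B I where
  toFun η := (⟨fun x => η.1 x ∘ₗ LinearMap.inl k _ _, fun x y h => by
      ext v
      exact (naturality η h (v, 0)).trans (congrArg (η.1 y)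
        (Prod.ext rfl (show (B.map h).hom.hom 0 = 0 from map_zero _)))⟩,
    ⟨fun x => η.1 x ∘ₗ LinearMap.inr k _ _, fun x y h => by
      ext v
      exact (naturality η h (0, v)).trans (congrArg (η.1 y)
        (Prod.ext (show (A.map h).hom.hom 0 = 0 from map_zero _) rfl))⟩)
  invFun σ := ⟨fun x => (σ.1.1 x).coprod (σ.2.1 x), fun x y h => by
      ext v
      show (I.map h).hom.hom (σ.1.1 x v.1 + σ.2.1 x v.2) =
        σ.1.1 y ((A.map h).hom.hom v.1) + σ.2.1 y ((B.map h).hom.hom v.2)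
      rw [map_add, naturality, naturality]⟩
  map_add' _ _ := rfl
  map_smul' _ _ := rfl
  left_inv η := by
    ext x v
    change A.obj x × B.obj x at v
    refine ((η.1 x).map_add _ _).symm.trans (congrArg (η.1 x) ?_)
    exact Prod.ext (add_zero v.1) (zero_add v.2)
  right_inv σ := Prod.ext (Subtype.ext (funext fun x => LinearMap.coprod_inl _ _))
    (Subtype.ext (funext fun x => LinearMap.coprod_inr _ _))

end natTransSubmodule

section TestModules

variable (k : Type) [Field k] {P : Type} [PartialOrder P]

/-- `k` if `q ≤ p` and `q` is not minimal, `0` otherwise. Writing it as functions on the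
proposition `q ≤ p` makes the restriction maps of `testFunctor` definitional. -/
def testSpace (p q : P) : Submodule k (PLift (q ≤ p) → ULift.{w} k) where
  carrier := {g | IsMin q → g = 0}
  add_mem' hf hg hq := by rw [hf hq, hg hq, add_zero]
  zero_mem' _ := rfl
  smul_mem' c _ hf hq := by rw [hf hq, smul_zero]

namespace testSpace

def restrict (p : P) {q q' : P} (h : q ≤ q') : testSpace.{w} k p q →ₗ[k] testSpace k p q' where
  toFun g := ⟨fun hq' => g.1 ⟨h.trans hq'.down⟩, fun hmin => by rw [g.2 (hmin.mono h)]; rfl⟩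
  map_add' _ _ := rfl
  map_smul' _ _ := rfl

def eval {p q : P} (h : q ≤ p) : testSpace.{w} k p q →ₗ[k] k where
  toFun g := (g.1 ⟨h⟩).down
  map_add' _ _ := rfl
  map_smul' _ _ := rfl

def uliftEquiv (p q : P) : testSpace.{w} k p q ≃ₗ[k] testSpace.{w'} k p q where
  toFun g := ⟨fun h => ⟨(g.1 h).down⟩, fun hq => by rw [g.2 hq]; rfl⟩
  invFun g := ⟨fun h => ⟨(g.1 h).down⟩, fun hq => by rw [g.2 hq]; rfl⟩
  map_add' _ _ := rfl
  map_smul' _ _ := rfl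
  left_inv _ := rfl
  right_inv _ := rfl

lemma subsingleton (p : P) {q : P} (hq : IsMin q) : Subsingleton (testSpace.{w} k p q) :=
  ⟨fun f g => Subtype.ext ((f.2 hq).trans (g.2 hq).symm)⟩

end testSpace

def testFunctor (p : P) : P ⥤ FGModuleCat.{w} k where
  obj q := FGModuleCat.of k (testSpace k p q)
  map h := FGModuleCat.ofHom (testSpace.restrict k p (leOfHom h))

section

variable {C : Type*} [Category C] (F : C ⥤ P) (X : C ⥤ FGModuleCat.{v} k) (p : P)

lemma finrank_natTransSubmodule_testFunctor_ulift :
    Module.finrank k (natTransSubmodule k X (F ⋙ testFunctor.{w} k p)) =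
      Module.finrank k (natTransSubmodule k X (F ⋙ testFunctor.{w'} k p)) :=
  (natTransSubmodule.congr (fun _ => LinearEquiv.refl _ _) (fun _ _ _ => rfl)
    (fun x => testSpace.uliftEquiv k p (F.obj x)) (fun _ _ _ => rfl)).finrank_eq

lemma finrank_natTransSubmodule_testFunctor_of_isMin (hF : ∀ x, IsMin (F.obj x)) :
    Module.finrank k (natTransSubmodule k X (F ⋙ testFunctor.{w} k p)) = 0 :=
  have := natTransSubmodule.subsingleton (F := X) (G := F ⋙ testFunctor.{w} k p) fun x =>
    testSpace.subsingleton k p (hF x)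
  Module.finrank_zero_of_subsingleton

end

variable {C : Type*} [Preorder C] (L : C ⥤ P) (e : C) (hL : ∀ x, L.obj x ≤ L.obj e → x ≤ e)
  (hmin : ∀ x, ¬IsMin (L.obj x)) (N : C ⥤ FGModuleCat.{v} k)

def dualToNatTrans (φ : Module.Dual k (N.obj e)) :
    natTransSubmodule k N (L ⋙ testFunctor.{w} k (L.obj e)) :=
  ⟨fun x =>
    { toFun v := ⟨fun hx => ⟨φ ((N.map (homOfLE (hL x hx.down))).hom.hom v)⟩,
        fun hx => (hmin x hx).elim⟩
      map_add' v v' := Subtype.ext (funext fun _ => by simp; rfl)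
      map_smul' c v := Subtype.ext (funext fun _ => by simp; rfl) },
   fun x y h => by
    ext v
    refine Subtype.ext (funext fun hy => congrArg ULift.up ?_)
    show φ ((N.map (homOfLE _)).hom.hom v) =
      φ ((N.map (homOfLE _)).hom.hom ((N.map h).hom.hom v))
    rw [Subsingleton.elim (homOfLE _) (h ≫ homOfLE (hL y hy.down)), N.map_comp]
    rfl⟩

def natTransEquivDual :
    natTransSubmodule k N (L ⋙ testFunctor.{w} k (L.obj e)) ≃ₗ[k] Module.Dual k (N.obj e) where
  toFun η := testSpace.eval k le_rfl ∘ₗ η.1 e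
  map_add' _ _ := rfl
  map_smul' _ _ := rfl
  invFun := dualToNatTrans k L e hL hmin N
  left_inv η := by
    ext x v
    refine Subtype.ext (funext fun hx => ?_)
    exact (congrArg (fun g => (g.1 ⟨le_rfl⟩ : ULift k))
      (natTransSubmodule.naturality η (homOfLE (hL x hx.down)) v)).symm
  right_inv φ := by
    ext v
    show φ ((N.map (homOfLE _)).hom.hom v) = φ v
    rw [Subsingleton.elim (homOfLE _) (𝟙 e), N.map_id]
    rfl

end TestModules

section Divergence

variable {k : Type} [Field k] {P : Type} [PartialOrder P] [PredOrder P]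

variable (k) in
def predIterTestFunctor (p : P) (n : ℕ) : P ⥤ FGModuleCat.{w} k :=
  (Order.pred_mono.iterate n).functor ⋙ testFunctor k p

/-- The function `f_X` of the proof sketch, with `I_n = predIterTestFunctor k p n`. -/
noncomputable def testDim (X : Cov P ⥤ FGModuleCat.{v} k) (p : P) (n : ℕ) : ℕ :=
  Module.finrank k (natTransSubmodule k X (covFront P ⋙ predIterTestFunctor.{v} k p n))

lemma covBack_comp_predIterTestFunctor (p : P) (n : ℕ) :
    covBack P ⋙ predIterTestFunctor.{w} k p n = covFront P ⋙ predIterTestFunctor k p (n + 1) := by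
  rw [covBack_eq_covFront_comp_pred, Functor.assoc]
  rfl

lemma finrank_natTransSubmodule_of_isLeftKanExtension {C : Type*} [Category C] (L : C ⥤ P)
    {X : C ⥤ FGModuleCat.{v} k} (X' : P ⥤ FGModuleCat.{v} k) (α : X ⟶ L ⋙ X')
    [X'.IsLeftKanExtension α] (p : P) (n : ℕ) :
    Module.finrank k (natTransSubmodule k X' (predIterTestFunctor.{w} k p n)) =
      Module.finrank k (natTransSubmodule k X (L ⋙ predIterTestFunctor.{v} k p n)) :=
  (finrank_natTransSubmodule_testFunctor_ulift k _ X' p).trans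
    (natTransSubmodule.lanEquiv L X' α _).finrank_eq

lemma testDim_eq_zero (X : Cov P ⥤ FGModuleCat.{v} k) (p : P) {n : ℕ}
    (hn : ∀ y : P, IsMin (Order.pred^[n] y)) : testDim X p n = 0 :=
  finrank_natTransSubmodule_testFunctor_of_isMin k
    (covFront P ⋙ (Order.pred_mono.iterate n).functor) X p fun f => hn f.tgt

variable [Finite P]

lemma finrank_natTransSubmodule_dsum {U : Cov P ⥤ FGModuleCat.{v} k}
    {V : Cov P ⥤ FGModuleCat.{v'} k} {A : P ⥤ FGModuleCat.{v} k} {B : P ⥤ FGModuleCat.{v'} k}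
    (a : U ⟶ covFront P ⋙ A) (b : V ⟶ covBack P ⋙ B) [A.IsLeftKanExtension a]
    [B.IsLeftKanExtension b] (p : P) (n : ℕ) :
    Module.finrank k (natTransSubmodule k (dsum A B) (predIterTestFunctor.{w} k p n)) =
      testDim U p n + testDim V p (n + 1) := by
  rw [(natTransSubmodule.dsumEquiv A B _).finrank_eq, Module.finrank_prod,
    finrank_natTransSubmodule_of_isLeftKanExtension _ A a,
    finrank_natTransSubmodule_of_isLeftKanExtension _ B b, covBack_comp_predIterTestFunctor]
  rfl

lemma testDim_tgt_zero (X : Cov P ⥤ FGModuleCat.{v} k) (e : Cov P) :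
    testDim X e.tgt 0 = Module.finrank k (X.obj e) :=
  ((natTransEquivDual k (covFront P) e (fun _ => Cov.le_of_tgt_le)
    (fun f => not_isMin_of_lt f.cov.lt) X).finrank_eq).trans Subspace.dual_finrank_eq

theorem finrank_obj_eq_of_dsum_iso {U : Cov P ⥤ FGModuleCat.{v} k}
    {V : Cov P ⥤ FGModuleCat.{v'} k} {A D : P ⥤ FGModuleCat.{v} k} {B C : P ⥤ FGModuleCat.{v'} k}
    (a : U ⟶ covFront P ⋙ A) (b : V ⟶ covBack P ⋙ B) (c : V ⟶ covFront P ⋙ C)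
    (d : U ⟶ covBack P ⋙ D) [A.IsLeftKanExtension a] [B.IsLeftKanExtension b]
    [C.IsLeftKanExtension c] [D.IsLeftKanExtension d] (θ : dsum A B ≅ dsum C D) (e : Cov P) :
    Module.finrank k (U.obj e) = Module.finrank k (V.obj e) := by
  have step (n : ℕ) : testDim U e.tgt n + testDim V e.tgt (n + 1) =
      testDim V e.tgt n + testDim U e.tgt (n + 1) := by
    calc _ = Module.finrank k
            (natTransSubmodule k (dsum A B) (predIterTestFunctor.{0} k e.tgt n)) :=
          (finrank_natTransSubmodule_dsum a b _ _).symm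
      _ = Module.finrank k
            (natTransSubmodule k (dsum C D) (predIterTestFunctor.{0} k e.tgt n)) :=
          (natTransSubmodule.congr _ (natTransSubmodule.isoToLinearEquiv_mem θ)
            (fun _ => LinearEquiv.refl _ _) (fun _ _ _ => rfl)).finrank_eq
      _ = _ := finrank_natTransSubmodule_dsum c d _ _
  have telescope (n : ℕ) : testDim U e.tgt 0 + testDim V e.tgt n =
      testDim V e.tgt 0 + testDim U e.tgt n := by
    induction n with
    | zero => exact add_comm _ _
    | succ n ih => have := step n; omega
  obtain ⟨N, hN⟩ := exists_forall_isMin_pred_iterate (P := P)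
  have := telescope N
  rw [testDim_eq_zero U _ hN, testDim_eq_zero V _ hN, testDim_tgt_zero, testDim_tgt_zero] at this
  omega

end Divergence

theorem statement8 (k : Type) [Field k] (P : Type) [Fintype P] [PartialOrder P]
    -- the Hasse diagram of `P` is a tree ...
    (htree : (SimpleGraph.fromRel (fun a b : P => a ⋖ b)).IsTree)
    -- ... which is rooted: `P` has a unique minimal element
    (hroot : ∃! m : P, IsMin m)
    (U V : Cov P ⥤ FGModuleCat k)
    -- the left divergence of `[U] − [V]` vanishes:
    -- a natural isomorphism `L_φ(U) ⊕ L_β(V) ≅ L_φ(V) ⊕ L_β(U)`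
    (hdiv : ∃ (A B C D : P ⥤ FGModuleCat k)
      (a : U ⟶ covFront P ⋙ A) (b : V ⟶ covBack P ⋙ B)
      (c : V ⟶ covFront P ⋙ C) (d : U ⟶ covBack P ⋙ D),
      A.IsLeftKanExtension a ∧ B.IsLeftKanExtension b ∧
      C.IsLeftKanExtension c ∧ D.IsLeftKanExtension d ∧
      Nonempty (dsum A B ≅ dsum C D)) :
    ∀ e : Cov P, Module.finrank k (U.obj e) = Module.finrank k (V.obj e) := by
  obtain ⟨A, B, C, D, a, b, c, d, hA, hB, hC, hD, ⟨θ⟩⟩ := hdiv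
  let := PredOrder.ofCovByUnique (eq_of_covBy_of_hasseGraph_isTree htree hroot)
  exact finrank_obj_eq_of_dsum_iso a b c d θ
end

section
/- Let G be a loop-free digraph (at most one directed edge between any ordered pair of distinct vertices, and no edges from a vertex to itself) that is acyclic (contains no directed cycle) and transitively reduced (for every directed edge (u,w) there is no directed path of length at least 2 from u to w). Then the line digraph of G — whose vertices are the directed edges of G, with a directed edge from (u,v) to (v,w) for every pair of consecutive edges — is also acyclic and transitively reduced. -/
/-!
A path `e₀ → e₁ → ⋯ → eₙ` in the line digraph traces the path `e₀.1 → e₁.1 → ⋯ → eₙ.1` in `G`.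
Hence a cycle in the line digraph gives a cycle in `G`; and if `e → g` and `e → f`, then `g` and
`f` leave the same vertex, so a path `g →⁺ f` would again give a cycle in `G`.
-/

open Relation

namespace Relation

variable {α : Type*}

def IsAcyclic (r : α → α → Prop) : Prop :=
  ∀ a, ¬ TransGen r a a

def IsTransReduced (r : α → α → Prop) : Prop :=
  ∀ a c, r a c → ¬ ∃ b, r a b ∧ TransGen r b c

end Relation

namespace LineDigraph

variable {V : Type*} (E : V → V → Prop)

abbrev Vertex : Type _ := {e : V × V // E e.1 e.2}

def Adj (a b : Vertex E) : Prop :=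
  (a : V × V).2 = (b : V × V).1

variable {E}

theorem transGen_fst_of_transGen_adj {a b : Vertex E} (h : TransGen (Adj E) a b) :
    TransGen E (a : V × V).1 (b : V × V).1 := by
  induction h with
  | single hab => exact .single (hab ▸ a.2)
  | @tail c d _ hcd ih => exact ih.tail (hcd ▸ c.2)

theorem isAcyclic_adj (hE : IsAcyclic E) : IsAcyclic (Adj E) :=
  fun _ he => hE _ (transGen_fst_of_transGen_adj he)

theorem isTransReduced_adj (hE : IsAcyclic E) : IsTransReduced (Adj E) := by
  rintro _ f hef ⟨g, heg, hgf⟩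
  have hsource : (g : V × V).1 = (f : V × V).1 := heg.symm.trans hef
  exact hE _ (hsource ▸ transGen_fst_of_transGen_adj hgf)

end LineDigraph

theorem statement13_general (V : Type) (E : V → V → Prop)
    -- `G` is acyclic: no directed cycle
    (hacyclic : ∀ v : V, ¬ Relation.TransGen E v v) :
    -- the line digraph of `G` (vertices: edges of `G`; edge relation: consecutiveness)
    -- is acyclic ...
    (∀ e : {e : V × V // E e.1 e.2},
      ¬ Relation.TransGen (fun a b : {e : V × V // E e.1 e.2} => (a : V × V).2 = (b : V × V).1) e e) ∧
    -- ... and transitively reduced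
    (∀ e f : {e : V × V // E e.1 e.2},
      (e : V × V).2 = (f : V × V).1 →
      ¬ ∃ g : {e : V × V // E e.1 e.2},
          (e : V × V).2 = (g : V × V).1 ∧
          Relation.TransGen (fun a b : {e : V × V // E e.1 e.2} => (a : V × V).2 = (b : V × V).1) g f) :=
  ⟨LineDigraph.isAcyclic_adj hacyclic, LineDigraph.isTransReduced_adj hacyclic⟩

theorem statement13 (V : Type) (E : V → V → Prop)
    -- `G = (V, E)` is loop-free
    (hloop : ∀ v : V, ¬ E v v)
    -- `G` is acyclic: no directed cycle
    (hacyclic : ∀ v : V, ¬ Relation.TransGen E v v)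
    -- `G` is transitively reduced: for every edge `(u,w)` there is no directed path of
    -- length at least 2 from `u` to `w`
    (hred : ∀ u w : V, E u w → ¬ ∃ z : V, E u z ∧ Relation.TransGen E z w) :
    -- the line digraph of `G` (vertices: edges of `G`; edge relation: consecutiveness)
    -- is acyclic ...
    (∀ e : {e : V × V // E e.1 e.2},
      ¬ Relation.TransGen (fun a b : {e : V × V // E e.1 e.2} => (a : V × V).2 = (b : V × V).1) e e) ∧
    -- ... and transitively reduced
    (∀ e f : {e : V × V // E e.1 e.2},
      (e : V × V).2 = (f : V × V).1 →
      ¬ ∃ g : {e : V × V // E e.1 e.2},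
          (e : V × V).2 = (g : V × V).1 ∧
          Relation.TransGen (fun a b : {e : V × V // E e.1 e.2} => (a : V × V).2 = (b : V × V).1) g f) :=
  statement13_general V E hacyclic
end

section
/- Let P be a finite poset and M a kP-module. Define kP̂-modules K_M and C_M by K_M(u,v) = ker(M(u ≤ v) : M(u) → M(v)) and C_M(u,v) = coker(M(u ≤ v) : M(u) → M(v)), where for a relation (u,v) ≤ (x,y) in P̂ the map K_M((u,v) ≤ (x,y)) is the restriction of M(u ≤ x) (which carries ker M(u ≤ v) into ker M(x ≤ y)) and C_M((u,v) ≤ (x,y)) is the map induced by M(v ≤ y) on the cokernels. Then K_M and C_M are virtually trivial: they send every non-identity morphism of P̂ to the zero map. -/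
theorem hatle.eq_or_tgt_le_src {P : Type} [PartialOrder P] {e f : Cov P} (h : hatle e f) :
    e = f ∨ e.tgt ≤ f.src := by
  induction h using Relation.ReflTransGen.head_induction_on with
  | refl => exact Or.inl rfl
  | @head a c hac _ ih =>
    right
    rcases ih with rfl | hcf
    · exact hac.le
    · exact hac.le.trans (c.cov.le.trans hcf)

namespace PModule

variable {k P : Type} [Field k] [Preorder P] (M : PModule k P) {x y z : P}

theorem map_eq_comp (hxy : x ≤ y) (hyz : y ≤ z) (hxz : x ≤ z) :
    M.map hxz = (M.map hyz).comp (M.map hxy) :=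
  M.map_comp hxy hyz

theorem map_apply_eq_zero_of_mem_ker (hxy : x ≤ y) (hyz : y ≤ z) (hxz : x ≤ z) {m : M.V x}
    (hm : m ∈ LinearMap.ker (M.map hxy)) : M.map hxz m = 0 := by
  rw [M.map_eq_comp hxy hyz, LinearMap.comp_apply, LinearMap.mem_ker.mp hm, map_zero]

theorem map_apply_mem_range (hxy : x ≤ y) (hyz : y ≤ z) (hxz : x ≤ z) (m : M.V x) :
    M.map hxz m ∈ LinearMap.range (M.map hyz) := by
  rw [M.map_eq_comp hxy hyz]
  exact LinearMap.mem_range_self _ _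

end PModule

theorem statement15_general (k : Type) [Field k] (P : Type) [PartialOrder P]
    (M : PModule k P) :
    ∀ (e f : Cov P), hatle e f → e ≠ f →
      ∀ (h0 : e.src ≤ f.src) (h1 : e.tgt ≤ f.tgt),
        -- the map `K_M(e ≤ f)`, i.e. the restriction of `M(e.src ≤ f.src)` to
        -- `ker M(e.src ≤ e.tgt)`, is zero (hence carries it into `ker M(f.src ≤ f.tgt)`)
        (∀ m ∈ LinearMap.ker (M.map e.cov.le), M.map h0 m = 0) ∧
        -- the map `C_M(e ≤ f)` induced by `M(e.tgt ≤ f.tgt)` on cokernels is zero, i.e.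
        -- the image of `M(e.tgt ≤ f.tgt)` is contained in the image of `M(f.src ≤ f.tgt)`
        (∀ m : M.V e.tgt, M.map h1 m ∈ LinearMap.range (M.map f.cov.le)) := by
  intro e f hef hne h0 h1
  have hgap : e.tgt ≤ f.src := hef.eq_or_tgt_le_src.resolve_left hne
  exact ⟨fun m hm => M.map_apply_eq_zero_of_mem_ker e.cov.le hgap h0 hm,
    fun m => M.map_apply_mem_range hgap f.cov.le h1 m⟩

theorem statement15 (k : Type) [Field k] (P : Type) [Fintype P] [PartialOrder P]
    (M : PModule k P) :
    ∀ (e f : Cov P), hatle e f → e ≠ f →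
      ∀ (h0 : e.src ≤ f.src) (h1 : e.tgt ≤ f.tgt),
        -- the map `K_M(e ≤ f)`, i.e. the restriction of `M(e.src ≤ f.src)` to
        -- `ker M(e.src ≤ e.tgt)`, is zero (hence carries it into `ker M(f.src ≤ f.tgt)`)
        (∀ m ∈ LinearMap.ker (M.map e.cov.le), M.map h0 m = 0) ∧
        -- the map `C_M(e ≤ f)` induced by `M(e.tgt ≤ f.tgt)` on cokernels is zero, i.e.
        -- the image of `M(e.tgt ≤ f.tgt)` is contained in the image of `M(f.src ≤ f.tgt)`
        (∀ m : M.V e.tgt, M.map h1 m ∈ LinearMap.range (M.map f.cov.le)) :=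
  statement15_general k P M
end

section
/- Let P be a finite poset and M a kP-module. Then in the abelian category of kP-modules (functors from P to finite-dimensional k-vector spaces), M admits a projective resolution of finite length: there exists an exact sequence 0 → Q_n → ⋯ → Q_1 → Q_0 → M → 0 in which every Q_i is a projective object, and n can be taken at most the length of the longest chain in P (the maximal number of strict inequalities x_0 < x_1 < ⋯ < x_n in P). -/
/-!
For a `kP`-module `N`, let `cover N` be the module with `(cover N)(y) = ⨁_{x ≤ y} N(x)`, i.e.
`⨁ₓ N(x) ⊗ k[Hom(x, -)]`, the free `kP`-module on the graded vector space underlying `N`.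
Maps `cover N ⟶ E` are the same as families of linear maps `N(x) → E(x)` (`desc`); since
epimorphisms of `kP`-modules are objectwise surjective, they split objectwise, so `cover N` is
projective, and the identity family gives an epimorphism `π : cover N ⟶ N`.

Iterating kernels of `π` gives syzygies `syzygy M j` and a projective resolution. If `N`
vanishes strictly below `y`, then `(cover N)(y) = N(y)` and `π` is injective at `y`; hence
`syzygy M j` vanishes at every point of height `< j`, and it is zero once `j` exceeds the
length of the longest chain.
-/

open CategoryTheory Limits

universe v

lemma Order.height_le_of_forall_isChain {α : Type*} [Preorder α] {n : ℕ}
    (hn : ∀ l : List α, l.IsChain (· < ·) → l.length ≤ n + 1) (a : α) :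
    Order.height a ≤ n :=
  Order.height_le fun p _ => by
    have := hn p.toList p.isChain_toList
    rw [RelSeries.length_toList] at this
    exact_mod_cast (by omega : p.length ≤ n)

namespace PosetModule

noncomputable section

open Classical

variable {k : Type*} [Field k]

section FunctorCategory

variable {C : Type*} [Category C]

lemma surjective_app_of_epi {E X : C ⥤ FGModuleCat.{v} k} (e : E ⟶ X) [Epi e] (y : C) :
    Function.Surjective (e.app y) := by
  have : Epi ((forget₂ (FGModuleCat k) (ModuleCat k)).map (e.app y)) := inferInstance
  exact (ModuleCat.epi_iff_surjective _).1 this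

lemma isZero_of_subsingleton_obj (F : C ⥤ FGModuleCat.{v} k) (h : ∀ y, Subsingleton (F.obj y)) :
    IsZero F :=
  Functor.isZero F fun y => IsZero.of_full_of_faithful_of_isZero (forget₂ _ (ModuleCat k)) _
    (ModuleCat.isZero_iff_subsingleton.2 (h y))

section Kernel

variable {A B : C ⥤ FGModuleCat.{v} k} (τ : A ⟶ B)

def kernelFunctor : C ⥤ FGModuleCat.{v} k where
  obj y := FGModuleCat.of k (LinearMap.ker (τ.app y).hom.hom)
  map {y y'} f := ConcreteCategory.ofHom (C := FGModuleCat.{v} k) <|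
    (A.map f).hom.hom.restrict fun a (ha : τ.app y a = 0) => by
      change τ.app y' (A.map f a) = 0
      rw [NatTrans.naturality_apply, ha, map_zero]
  map_id y := FGModuleCat.hom_ext <| LinearMap.ext fun a => Subtype.ext <|
    congrArg (fun t => t a.1) (A.map_id y)
  map_comp f g := FGModuleCat.hom_ext <| LinearMap.ext fun a => Subtype.ext <|
    congrArg (fun t => t a.1) (A.map_comp f g)

def kernelι : kernelFunctor τ ⟶ A where
  app y := ConcreteCategory.ofHom (C := FGModuleCat.{v} k)
    (LinearMap.ker (τ.app y).hom.hom).subtype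
  naturality _ _ _ := rfl

lemma range_comp_kernelι {Z : C ⥤ FGModuleCat.{v} k} (p : Z ⟶ kernelFunctor τ)
    (hp : ∀ y, Function.Surjective (p.app y)) (y : C) :
    LinearMap.range ((p ≫ kernelι τ).app y).hom.hom = LinearMap.ker (τ.app y).hom.hom := by
  simp only [NatTrans.comp_app, ObjectProperty.FullSubcategory.comp_hom, ModuleCat.hom_comp]
  rw [LinearMap.range_comp, (LinearMap.range_eq_top (f := (p.app y).hom.hom)).2 (hp y),
    Submodule.map_top]
  exact Submodule.range_subtype _

lemma ker_comp_kernelι {Z : C ⥤ FGModuleCat.{v} k} (p : Z ⟶ kernelFunctor τ) (y : C) :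
    LinearMap.ker ((p ≫ kernelι τ).app y).hom.hom = LinearMap.ker (p.app y).hom.hom := by
  simp only [NatTrans.comp_app, ObjectProperty.FullSubcategory.comp_hom, ModuleCat.hom_comp]
  rw [LinearMap.ker_comp, show LinearMap.ker ((kernelι τ).app y).hom.hom = ⊥ from
    Submodule.ker_subtype _, Submodule.comap_bot]

end Kernel

end FunctorCategory

variable {P : Type}

section Preorder

variable [Preorder P]

@[simp]
lemma map_map_apply (F : P ⥤ FGModuleCat.{v} k) {x y z : P} (f : x ⟶ y) (g : y ⟶ z)
    (v : F.obj x) :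
    F.map g (F.map f v) = F.map (homOfLE (f.le.trans g.le)) v := by
  rw [← ConcreteCategory.comp_apply, ← F.map_comp]
  rfl

section Cover

variable (N : P ⥤ FGModuleCat.{v} k)

abbrev CoverObj (y : P) : Type v := ∀ x : P, PLift (x ≤ y) → N.obj x

def coverMap (y y' : P) : CoverObj N y →ₗ[k] CoverObj N y' where
  toFun g x _ := if hx : x ≤ y then g x ⟨hx⟩ else 0
  map_add' g₁ g₂ := by funext x _; by_cases hx : x ≤ y <;> simp [hx]
  map_smul' c g := by funext x _; by_cases hx : x ≤ y <;> simp [hx]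

@[simp]
lemma coverMap_apply {y y' : P} (g : CoverObj N y) (x : P) (hx : PLift (x ≤ y')) :
    coverMap N y y' g x hx = if h : x ≤ y then g x ⟨h⟩ else 0 := rfl

lemma coverMap_self (y : P) : coverMap N y y = LinearMap.id :=
  LinearMap.ext fun g => funext₂ fun x hx => by simp [hx.down]

lemma coverMap_comp_coverMap {y y' y'' : P} (h : y ≤ y') :
    coverMap N y' y'' ∘ₗ coverMap N y y' = coverMap N y y'' :=
  LinearMap.ext fun g => funext₂ fun x hx => by
    by_cases hxy : x ≤ y
    · simp [hxy, hxy.trans h]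
    · simp [hxy]

def ι (y : P) : N.obj y →ₗ[k] CoverObj N y where
  toFun m x _ := if hx : x = y then N.map (homOfLE hx.ge) m else 0
  map_add' m₁ m₂ := by funext x _; by_cases hx : x = y <;> simp [hx]
  map_smul' c m := by funext x _; by_cases hx : x = y <;> simp [hx]

@[simp]
lemma ι_apply (y : P) (m : N.obj y) (x : P) (hx : PLift (x ≤ y)) :
    ι N y m x hx = if h : x = y then N.map (homOfLE h.ge) m else 0 := rfl

variable [Fintype P]

lemma sum_coverMap_ι {y : P} (g : CoverObj N y) :
    ∑ x, (if h : x ≤ y then coverMap N x y (ι N x (g x ⟨h⟩)) else 0) = g := by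
  funext x' hx'
  rw [Finset.sum_apply, Finset.sum_apply, Finset.sum_eq_single_of_mem x' (Finset.mem_univ _)]
  · simp [hx'.down]
  · intro x _ hne
    by_cases h : x ≤ y
    · by_cases h' : x' ≤ x <;> simp [h, h', Ne.symm hne]
    · simp [h]

def cover : P ⥤ FGModuleCat.{v} k where
  obj y := FGModuleCat.of k (CoverObj N y)
  map {y y'} _ := FGModuleCat.ofHom (coverMap N y y')
  map_id y := FGModuleCat.hom_ext (coverMap_self N y)
  map_comp f _ := FGModuleCat.hom_ext (coverMap_comp_coverMap N f.le).symm

variable {N}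

def descApp {E : P ⥤ FGModuleCat.{v} k} (ψ : ∀ x, N.obj x →ₗ[k] E.obj x) (y : P) :
    CoverObj N y →ₗ[k] E.obj y where
  toFun g := ∑ x, if h : x ≤ y then E.map (homOfLE h) (ψ x (g x ⟨h⟩)) else 0
  map_add' g₁ g₂ := by
    rw [← Finset.sum_add_distrib]
    refine Finset.sum_congr rfl fun x _ => ?_
    by_cases h : x ≤ y <;> simp [h]
  map_smul' c g := by
    rw [RingHom.id_apply, Finset.smul_sum]
    refine Finset.sum_congr rfl fun x _ => ?_
    by_cases h : x ≤ y <;> simp [h]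

@[simp]
lemma descApp_apply {E : P ⥤ FGModuleCat.{v} k} (ψ : ∀ x, N.obj x →ₗ[k] E.obj x) (y : P)
    (g : CoverObj N y) :
    descApp ψ y g = ∑ x, if h : x ≤ y then E.map (homOfLE h) (ψ x (g x ⟨h⟩)) else 0 := rfl

lemma descApp_ι {E : P ⥤ FGModuleCat.{v} k} (ψ : ∀ x, N.obj x →ₗ[k] E.obj x) (y : P)
    (m : N.obj y) : descApp ψ y (ι N y m) = ψ y m := by
  rw [descApp_apply, Finset.sum_eq_single_of_mem y (Finset.mem_univ y)]
  · simp
  · intro x _ hxy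
    by_cases h : x ≤ y <;> simp [h, hxy]

def desc {E : P ⥤ FGModuleCat.{v} k} (ψ : ∀ x, N.obj x →ₗ[k] E.obj x) : cover N ⟶ E where
  app y := ConcreteCategory.ofHom (C := FGModuleCat.{v} k) (descApp ψ y)
  naturality y y' f := ConcreteCategory.ext_apply fun (g : CoverObj N y) => by
    change descApp ψ y' (coverMap N y y' g) = E.map f (descApp ψ y g)
    simp only [descApp_apply, map_sum]
    refine Finset.sum_congr rfl fun x _ => ?_
    by_cases h : x ≤ y
    · simp [h, h.trans f.le]
    · by_cases h' : x ≤ y' <;> simp [h, h']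

lemma desc_comp {E X : P ⥤ FGModuleCat.{v} k} (ψ : ∀ x, N.obj x →ₗ[k] E.obj x)
    (t : E ⟶ X) :
    desc ψ ≫ t = desc fun x => (t.app x).hom.hom ∘ₗ ψ x := by
  ext y : 2
  refine ConcreteCategory.ext_apply fun (g : CoverObj N y) => ?_
  change t.app y (descApp ψ y g) = descApp _ y g
  simp only [descApp_apply, map_sum]
  refine Finset.sum_congr rfl fun x _ => ?_
  by_cases h : x ≤ y
  · simp only [h, dite_true, NatTrans.naturality_apply, LinearMap.comp_apply]
    rfl
  · simp [h]

lemma app_eq_sum {X : P ⥤ FGModuleCat.{v} k} (f : cover N ⟶ X) {y : P} (g : CoverObj N y) :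
    f.app y g =
      ∑ x, if h : x ≤ y then X.map (homOfLE h) (f.app x (ι N x (g x ⟨h⟩))) else 0 := by
  let φ : CoverObj N y →ₗ[k] X.obj y := (f.app y).hom.hom
  change φ g = _
  conv_lhs => rw [← sum_coverMap_ι N g, map_sum]
  refine Finset.sum_congr rfl fun x _ => ?_
  by_cases h : x ≤ y
  · simp only [h, dite_true]
    exact NatTrans.naturality_apply f (homOfLE h) _
  · simp [h]

lemma desc_comp_ι {X : P ⥤ FGModuleCat.{v} k} (f : cover N ⟶ X) :
    desc (fun x => (f.app x).hom.hom ∘ₗ ι N x) = f := by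
  ext y : 2
  exact ConcreteCategory.ext_apply fun (g : CoverObj N y) => (app_eq_sum f g).symm

variable (N) in
def π : cover N ⟶ N := desc fun _ => LinearMap.id

variable (N) in
lemma π_app_ι (y : P) (m : N.obj y) : (π N).app y (ι N y m) = m := descApp_ι _ y m

variable (N) in
lemma π_app_surjective (y : P) : Function.Surjective ((π N).app y) :=
  fun m => ⟨ι N y m, π_app_ι N y m⟩

instance projective_cover : Projective (cover N) where
  factors {E X} f e _ := by
    choose s hs using fun x => (e.app x).hom.hom.exists_rightInverse_of_surjective
      (LinearMap.range_eq_top.2 (surjective_app_of_epi e x))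
    refine ⟨desc fun x => s x ∘ₗ (f.app x).hom.hom ∘ₗ ι N x, ?_⟩
    conv_rhs => rw [← desc_comp_ι f]
    rw [desc_comp]
    congr 1
    funext x
    rw [← LinearMap.comp_assoc, hs, LinearMap.id_comp]

end Cover

variable [Fintype P]

lemma isZero_cover {N : P ⥤ FGModuleCat.{v} k} (h : ∀ y, Subsingleton (N.obj y)) :
    IsZero (cover N) :=
  isZero_of_subsingleton_obj _ fun _ => inferInstanceAs (Subsingleton (CoverObj N _))

def syzygy (M : P ⥤ FGModuleCat.{v} k) : ℕ → P ⥤ FGModuleCat.{v} k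
  | 0 => M
  | j + 1 => kernelFunctor (π (syzygy M j))

end Preorder

section PartialOrder

variable [PartialOrder P]

lemma eq_ι_of_subsingleton {N : P ⥤ FGModuleCat.{v} k} {y : P} (g : CoverObj N y)
    (h : ∀ x < y, Subsingleton (N.obj x)) : g = ι N y (g y ⟨le_rfl⟩) := by
  funext x hx
  by_cases hxy : x = y
  · subst hxy
    simp
  · have := h x (lt_of_le_of_ne hx.down hxy)
    exact Subsingleton.elim _ _

variable [Fintype P]

lemma subsingleton_kernelFunctor_π_obj (N : P ⥤ FGModuleCat.{v} k) (y : P)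
    (h : ∀ x < y, Subsingleton (N.obj x)) : Subsingleton ((kernelFunctor (π N)).obj y) := by
  refine subsingleton_of_forall_eq 0 fun ⟨g, hg⟩ => Subtype.ext ?_
  have hι := eq_ι_of_subsingleton (g : CoverObj N y) h
  have h0 : (π N).app y (ι N y (g y ⟨le_rfl⟩)) = 0 := by
    rw [← hι]
    exact hg
  rw [π_app_ι] at h0
  change g = 0
  rw [hι, h0, map_zero]
  rfl

lemma subsingleton_syzygy_obj (M : P ⥤ FGModuleCat.{v} k) (j : ℕ) (y : P)
    (hy : Order.height y < j) : Subsingleton ((syzygy M j).obj y) := by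
  induction j generalizing y with
  | zero => simp at hy
  | succ j ih =>
    have hy' : Order.height y ≤ j :=
      (ENat.lt_add_one_iff (ENat.natCast_ne_top j)).1 (by simpa using hy)
    exact subsingleton_kernelFunctor_π_obj _ y fun x hx =>
      ih x (Order.height_le_coe_iff.1 hy' x hx)

end PartialOrder

end

end PosetModule

open PosetModule

theorem statement19 (k : Type) [Field k] (P : Type) [Fintype P] [PartialOrder P]
    (M : P ⥤ FGModuleCat k)
    -- `n` bounds the length of the longest chain in `P`: every strictly increasing chain
    -- `x_0 < x_1 < ⋯ < x_m` (a list of `m + 1` elements) has `m ≤ n`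
    (n : ℕ) (hn : ∀ l : List P, l.Chain' (· < ·) → l.length ≤ n + 1) :
    -- there is an exact sequence `0 → Q_n → ⋯ → Q_1 → Q_0 → M → 0` of `kP`-modules
    -- in which every `Q_i` is projective
    ∃ (Q : ℕ → (P ⥤ FGModuleCat k)) (d : ∀ i : ℕ, Q (i + 1) ⟶ Q i) (ε : Q 0 ⟶ M),
      -- each `Q_i` is a projective object of the category of `kP`-modules
      (∀ i : ℕ, Projective (Q i)) ∧
      -- the resolution has length at most `n`
      (∀ i : ℕ, n < i → Limits.IsZero (Q i)) ∧
      -- exactness at `M`: `ε` is (objectwise) an epimorphism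
      (∀ x : P, Function.Surjective (ε.app x)) ∧
      -- exactness at `Q_0`
      (∀ x : P, LinearMap.range (((d 0).app x).hom.hom : (Q 1).obj x →ₗ[k] (Q 0).obj x)
        = LinearMap.ker ((ε.app x).hom.hom : (Q 0).obj x →ₗ[k] M.obj x)) ∧
      -- exactness at `Q_{i+1}` (for `i + 1 ≤ n` this is exactness in the middle; at the
      -- top, where `Q_{i+2} = 0`, it expresses injectivity of `Q_{n} → Q_{n-1}`)
      (∀ (i : ℕ) (x : P),
        LinearMap.range (((d (i + 1)).app x).hom.hom : (Q (i + 2)).obj x →ₗ[k] (Q (i + 1)).obj x)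
          = LinearMap.ker (((d i).app x).hom.hom : (Q (i + 1)).obj x →ₗ[k] (Q i).obj x)) := by
  have hheight := Order.height_le_of_forall_isChain hn
  refine ⟨fun i => cover (syzygy M i), fun i => π (syzygy M (i + 1)) ≫ kernelι (π (syzygy M i)),
    π M, fun i => inferInstance, fun i hi => ?_, π_app_surjective M,
    range_comp_kernelι _ _ (π_app_surjective _), fun i x => ?_⟩
  · exact isZero_cover fun y =>
      subsingleton_syzygy_obj M i y ((hheight y).trans_lt (by exact_mod_cast hi))
  · exact (range_comp_kernelι _ _ (π_app_surjective _) x).trans (ker_comp_kernelι _ _ x).symm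
end
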